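/- arXiv:2603.03262 — 3 statements merged into one kernel-verified Lean document; each statement's English description precedes it below -/
import Mathlib

section
/- (Cusp Minimization 2) Let G be a locally colored graph. Assume ω is a cycle with source a vertex v and no cusp at v, and x and y are two vertices of ω, both different from v, with x occurring before y (or equal to y), such that ω has at least one cusp between x and y (possibly at x or y). Suppose κ is a vertex such that there are a path ρ from x to κ, a path χ from y to κ, and an edge e with endpoints κ and l satisfying: (i) ρ·(κ,e,l) is a simple cusp-free path whose starting color is not the ending color of ω[v..x]; (ii) χ·(κ,e,l) is a simple cusp-free path whose starting color is not the starting color of ω[y..v]; (iii) the only vertices of ρ or χ that may belong to ω[y..v]·ω[v..x] are x and y. If there is a simple open cusp-free path of the form (κ,e,l)·p whose target u belongs to ω[y..v]·ω[v..x], and such that ρ and χ have no vertex in common with p, then either there exists a cusp-free cycle containing e, or there exists a cycle with source v, with no cusp at v, and with strictly fewer cusps than ω. -/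
/-- A finite undirected multigraph without loops: each edge is incident to
exactly two distinct endpoints. -/
structure Multigraph (V : Type) (E : Type) where
  inc : E → V → Prop
  exists_two : ∀ e : E, ∃ a b : V, a ≠ b ∧ ∀ w : V, inc e w ↔ (w = a ∨ w = b)

namespace Multigraph

variable {V E C : Type}

/-- A path (walk) in a multigraph: an alternating sequence of vertices and
edges such that the endpoints of the `i`-th edge are exactly the `i`-th and
`(i+1)`-th vertices. -/
structure Walk (G : Multigraph V E) where
  len : ℕ
  vert : Fin (len + 1) → V
  edge : Fin len → E
  incs : ∀ (i : ℕ) (h : i < len), ∀ w : V,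
    G.inc (edge ⟨i, h⟩) w ↔ (w = vert ⟨i, by omega⟩ ∨ w = vert ⟨i + 1, by omega⟩)

variable {G : Multigraph V E}

namespace Walk

/-- The source (first vertex) of a path. -/
def src (p : G.Walk) : V := p.vert ⟨0, by omega⟩

/-- The target (last vertex) of a path. -/
def tgt (p : G.Walk) : V := p.vert ⟨p.len, by omega⟩

def IsClosed (p : G.Walk) : Prop := p.src = p.tgt

def IsOpen (p : G.Walk) : Prop := p.src ≠ p.tgt

/-- A path is simple when its edges are pairwise distinct and its vertices are
pairwise distinct, except that its two endpoints may coincide. -/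
def IsSimple (p : G.Walk) : Prop :=
  (∀ (i j : ℕ) (hi : i < p.len) (hj : j < p.len),
      p.edge ⟨i, hi⟩ = p.edge ⟨j, hj⟩ → i = j) ∧
  (∀ (i j : ℕ) (hi : i < p.len + 1) (hj : j < p.len + 1), i < j →
      p.vert ⟨i, hi⟩ = p.vert ⟨j, hj⟩ → i = 0 ∧ j = p.len)

/-- A cycle is a non-empty simple closed path. -/
def IsCycle (p : G.Walk) : Prop := p.IsSimple ∧ p.IsClosed ∧ 0 < p.len

/-- `x` occurs as a vertex of `p`. -/
def MemV (p : G.Walk) (x : V) : Prop := ∃ (i : ℕ) (h : i < p.len + 1), p.vert ⟨i, h⟩ = x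

/-- `e` occurs as an edge of `p`. -/
def MemE (p : G.Walk) (e : E) : Prop := ∃ (i : ℕ) (h : i < p.len), p.edge ⟨i, h⟩ = e

/-- With respect to a local coloring `c`, the path `p` has a cusp at
vertex-position `j`, at vertex `u`, with color `α`: either an internal cusp
(two consecutive distinct edges with the same color at their middle vertex),
or -- when `j = 0` and `p` is closed -- the cusp formed by its last edge, its
source and its first edge. -/
def CuspAt (c : E → V → C) (p : G.Walk) (j : ℕ) (u : V) (α : C) : Prop :=
  (∃ (h1 : 0 < j) (h2 : j < p.len),
      p.vert ⟨j, by omega⟩ = u ∧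
      p.edge ⟨j - 1, by omega⟩ ≠ p.edge ⟨j, h2⟩ ∧
      c (p.edge ⟨j - 1, by omega⟩) u = α ∧ c (p.edge ⟨j, h2⟩) u = α) ∨
  (j = 0 ∧ p.IsClosed ∧ p.src = u ∧
    ∃ h : 0 < p.len,
      p.edge ⟨p.len - 1, by omega⟩ ≠ p.edge ⟨0, h⟩ ∧
      c (p.edge ⟨p.len - 1, by omega⟩) u = α ∧ c (p.edge ⟨0, h⟩) u = α)

/-- `p` has a cusp at vertex-position `j`. -/
def CuspIdx (c : E → V → C) (p : G.Walk) (j : ℕ) : Prop := ∃ u α, p.CuspAt c j u α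

/-- `p` has a cusp whose vertex is `u`. -/
def HasCuspAtV (c : E → V → C) (p : G.Walk) (u : V) : Prop := ∃ j α, p.CuspAt c j u α

/-- A cusp-free (alternating) path. -/
def CuspFree (c : E → V → C) (p : G.Walk) : Prop := ∀ j : ℕ, ¬ p.CuspIdx c j

/-- The number of cusps of a path. -/
noncomputable def cuspCount (c : E → V → C) (p : G.Walk) : ℕ :=
  {j : ℕ | p.CuspIdx c j}.ncard

/-- The starting color of `p` is not `α`. -/
def StartColorNe (c : E → V → C) (p : G.Walk) (α : C) : Prop :=
  ∀ h : 0 < p.len, c (p.edge ⟨0, h⟩) p.src ≠ α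

/-- `p` is non-empty and its ending color is `β`. -/
def EndColorIs (c : E → V → C) (p : G.Walk) (β : C) : Prop :=
  ∃ h : 0 < p.len, c (p.edge ⟨p.len - 1, by omega⟩) p.tgt = β

/-- `q` is a (contiguous) sub-path of `p`. -/
def IsSubpathOf (q p : G.Walk) : Prop :=
  ∃ (k : ℕ) (hk : k + q.len ≤ p.len),
    (∀ (i : ℕ) (hi : i < q.len + 1), q.vert ⟨i, hi⟩ = p.vert ⟨k + i, by omega⟩) ∧
    (∀ (i : ℕ) (hi : i < q.len), q.edge ⟨i, hi⟩ = p.edge ⟨k + i, by omega⟩)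

/-- `r` is the path `p` extended (at its end) by the edge `e` to the vertex `l`;
that is, `r = p · (tgt p, e, l)`. -/
def ExtendsBy (r p : G.Walk) (e : E) (l : V) : Prop :=
  ∃ hlen : r.len = p.len + 1,
    (∀ (i : ℕ) (hi : i < p.len + 1), r.vert ⟨i, by omega⟩ = p.vert ⟨i, hi⟩) ∧
    (∀ (i : ℕ) (hi : i < p.len), r.edge ⟨i, by omega⟩ = p.edge ⟨i, hi⟩) ∧
    r.edge ⟨p.len, by omega⟩ = e ∧ r.vert ⟨p.len + 1, by omega⟩ = l

/-- `r` is the path obtained by prefixing `p` with the edge `e`;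
that is, `r = (src r, e, src p) · p`. -/
def ConsOf (r : G.Walk) (e : E) (p : G.Walk) : Prop :=
  ∃ hlen : r.len = p.len + 1,
    r.edge ⟨0, by omega⟩ = e ∧
    (∀ (i : ℕ) (hi : i < p.len + 1), r.vert ⟨i + 1, by omega⟩ = p.vert ⟨i, hi⟩) ∧
    (∀ (i : ℕ) (hi : i < p.len), r.edge ⟨i + 1, by omega⟩ = p.edge ⟨i, hi⟩)

end Walk

/-- `(v, α)` is a cusp-point: two distinct edges incident to `v` both have
color `α` at `v`. -/
def IsCuspPoint (G : Multigraph V E) (c : E → V → C) (v : V) (α : C) : Prop :=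
  ∃ e f : E, e ≠ f ∧ G.inc e v ∧ G.inc f v ∧ c e v = α ∧ c f v = α

/-- `(v, α) ⇝_p (u, β)`: `p` is a simple open cusp-free path from `v` to `u`
whose starting color is not `α` and whose ending color is `β`. -/
def StepsTo (G : Multigraph V E) (c : E → V → C) (v : V) (α : C) (u : V) (β : C)
    (p : G.Walk) : Prop :=
  p.IsSimple ∧ p.IsOpen ∧ p.CuspFree c ∧ p.src = v ∧ p.tgt = u ∧
    p.StartColorNe c α ∧ p.EndColorIs c β

/-- `(v, α) ⇝ (u, β)`. -/
def Steps (G : Multigraph V E) (c : E → V → C) (v : V) (α : C) (u : V) (β : C) : Prop :=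
  ∃ p : G.Walk, G.StepsTo c v α u β p

/-- `(v, α) ⊳_p (u, β)`: `(v, α) ⇝_p (u, β)` and no `⇝`-path from `(u, β)`
ends on a vertex of `p`. -/
def TriPath (G : Multigraph V E) (c : E → V → C) (v : V) (α : C) (u : V) (β : C)
    (p : G.Walk) : Prop :=
  G.StepsTo c v α u β p ∧
    ∀ (x : V) (τ : C) (q : G.Walk), G.StepsTo c u β x τ q → ¬ p.MemV x

/-- `(v, α) ⊳ (u, β)`. -/
def Tri (G : Multigraph V E) (c : E → V → C) (v : V) (α : C) (u : V) (β : C) : Prop :=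
  ∃ p : G.Walk, G.TriPath c v α u β p

/-- A splitting vertex: every cycle containing `v` has a cusp at `v`. -/
def IsSplitting (G : Multigraph V E) (c : E → V → C) (v : V) : Prop :=
  ∀ ω : G.Walk, ω.IsCycle → ω.MemV v → ω.HasCuspAtV c v

/-- A set `P` of vertex-color pairs dominates cusp-points. -/
def Dominates (G : Multigraph V E) (c : E → V → C) (P : Set (V × C)) : Prop :=
  ∀ (v : V) (α : C), G.IsCuspPoint c v α →
    (v, α) ∈ P ∨ ∃ (u : V) (β : C), (u, β) ∈ P ∧ G.Tri c v α u β

/-- `𝔐(v)`: the set of cycles with source `v`, whose last and first edges do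
not make a cusp at `v`, with a minimal number of cusps among such cycles. -/
def MinCycles (G : Multigraph V E) (c : E → V → C) (v : V) : Set G.Walk :=
  {ω | ω.IsCycle ∧ ω.src = v ∧ ¬ ω.CuspIdx c 0 ∧
    ∀ ω' : G.Walk, ω'.IsCycle → ω'.src = v → ¬ ω'.CuspIdx c 0 →
      ω.cuspCount c ≤ ω'.cuspCount c}

/-- The one-edge path `(v, e, u)`. -/
def singleWalk (G : Multigraph V E) (e : E) (v u : V)
    (hends : ∀ w : V, G.inc e w ↔ w = v ∨ w = u) : G.Walk where
  len := 1
  vert := fun i => if (i : ℕ) = 0 then v else u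
  edge := fun _ => e
  incs := by
    intro i h w
    have hi : i = 0 := by omega
    subst hi
    simpa using hends w

/-- An alternating cycle with respect to an edge-coloring: a cycle whose
consecutive edges (including last and first) have different colors. -/
def Walk.IsAlternatingCycle (c : E → C) (p : G.Walk) : Prop :=
  p.IsCycle ∧
  (∀ (i : ℕ) (h : i + 1 < p.len), c (p.edge ⟨i, by omega⟩) ≠ c (p.edge ⟨i + 1, h⟩)) ∧
  (∀ h : 0 < p.len, c (p.edge ⟨p.len - 1, by omega⟩) ≠ c (p.edge ⟨0, h⟩))

/-- `a` and `b` are connected in `G − v` (by a path avoiding `v`). -/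
def ReachAvoiding (G : Multigraph V E) (v a b : V) : Prop :=
  ∃ p : G.Walk, p.src = a ∧ p.tgt = b ∧
    ∀ (i : ℕ) (h : i < p.len + 1), p.vert ⟨i, h⟩ ≠ v

/-- A perfect matching: every vertex is incident to exactly one edge of `F`. -/
def IsPerfectMatching (G : Multigraph V E) (F : Set E) : Prop :=
  ∀ v : V, ∃! e : E, e ∈ F ∧ G.inc e v

/-- A bridge: an edge contained in no cycle. -/
def IsBridge (G : Multigraph V E) (e : E) : Prop :=
  ¬ ∃ ω : G.Walk, ω.IsCycle ∧ ω.MemE e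

/-- A `φ`-conformal cycle: a cycle `ω` such that `φ x` is an edge of `ω`
for every vertex `x` of `ω`. -/
def ConformalCycle (G : Multigraph V E) (φ : V → E) (ω : G.Walk) : Prop :=
  ω.IsCycle ∧ ∀ x : V, ω.MemV x → ω.MemE (φ x)

/-- A sub-graph: sets of vertices and edges, each edge having its endpoints
among the vertices. -/
structure Subgraph (G : Multigraph V E) where
  verts : Set V
  edges : Set E
  edge_mem : ∀ e ∈ edges, ∀ w : V, G.inc e w → w ∈ verts

/-- The walk `p` lies inside the sub-graph `S`. -/
def Walk.InSub (p : G.Walk) (S : G.Subgraph) : Prop :=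
  (∀ (i : ℕ) (h : i < p.len + 1), p.vert ⟨i, h⟩ ∈ S.verts) ∧
  (∀ (i : ℕ) (h : i < p.len), p.edge ⟨i, h⟩ ∈ S.edges)

/-- `S` is `⇝`-connected: any two distinct vertices of `S` are related by `⇝`
along a path inside `S`, for any starting color constraint. -/
def Subgraph.StepConnected (c : E → V → C) (S : G.Subgraph) : Prop :=
  ∀ v ∈ S.verts, ∀ u ∈ S.verts, v ≠ u → ∀ α : C,
    ∃ (p : G.Walk) (β : C), p.InSub S ∧ G.StepsTo c v α u β p

/-- `S` is connected: non-empty, and any two of its vertices are joined by a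
path lying inside it. -/
def Subgraph.IsConnected (S : G.Subgraph) : Prop :=
  (S.verts.Nonempty ∨ S.edges.Nonempty) ∧
  ∀ a ∈ S.verts, ∀ b ∈ S.verts,
    ∃ p : G.Walk, p.InSub S ∧ p.src = a ∧ p.tgt = b

/-- The sub-graph consisting of the vertices and edges of a walk. -/
def Walk.toSub (p : G.Walk) : G.Subgraph where
  verts := {x | p.MemV x}
  edges := {e | p.MemE e}
  edge_mem := by
    rintro e ⟨i, h, rfl⟩ w hw
    rw [p.incs i h w] at hw
    rcases hw with h' | h'
    · exact ⟨i, by omega, h'.symm⟩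
    · exact ⟨i + 1, by omega, h'.symm⟩

/-- Union of sub-graphs. -/
def Subgraph.union (S R : G.Subgraph) : G.Subgraph where
  verts := S.verts ∪ R.verts
  edges := S.edges ∪ R.edges
  edge_mem := by
    rintro e (he | he) w hw
    · exact Or.inl (S.edge_mem e he w hw)
    · exact Or.inr (R.edge_mem e he w hw)

/-- Inclusion of sub-graphs. -/
def Subgraph.le (S T : G.Subgraph) : Prop := S.verts ⊆ T.verts ∧ S.edges ⊆ T.edges

/-- `S` is a union of cusp-free cycles. -/
def IsCuspFreeCycleUnion (G : Multigraph V E) (c : E → V → C) (S : G.Subgraph) : Prop :=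
  ∃ F : Set G.Walk, (∀ ω ∈ F, Walk.IsCycle ω ∧ Walk.CuspFree c ω) ∧
    S.verts = {x | ∃ ω ∈ F, Walk.MemV ω x} ∧
    S.edges = {e | ∃ ω ∈ F, Walk.MemE ω e}

/-- `𝕺`: the set of maximal connected unions of cusp-free cycles. -/
def MaxCFCU (G : Multigraph V E) (c : E → V → C) : Set (G.Subgraph) :=
  {S | G.IsCuspFreeCycleUnion c S ∧ S.IsConnected ∧
    ∀ T : G.Subgraph, G.IsCuspFreeCycleUnion c T → T.IsConnected → S.le T → T.le S}

end Multigraph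

/-- A finite directed loopless multigraph. -/
structure DirMultigraph (V : Type) (E : Type) where
  srcE : E → V
  tgtE : E → V
  ne : ∀ e : E, srcE e ≠ tgtE e

/-- The underlying undirected multigraph of a directed multigraph. -/
def DirMultigraph.toMultigraph {V E : Type} (D : DirMultigraph V E) : Multigraph V E where
  inc e w := w = D.srcE e ∨ w = D.tgtE e
  exists_two e := ⟨D.srcE e, D.tgtE e, D.ne e, fun _ => Iff.rfl⟩

/-- `v` is a turning vertex of the cycle `ω`: the two edges incident to `v`
in `ω` either both have source `v` or both have target `v`. -/
def DirMultigraph.TurningAt {V E : Type} (D : DirMultigraph V E)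
    (ω : D.toMultigraph.Walk) (v : V) : Prop :=
  (∃ (j : ℕ) (h1 : 0 < j) (h2 : j < ω.len),
      ω.vert ⟨j, by omega⟩ = v ∧
      ((D.srcE (ω.edge ⟨j - 1, by omega⟩) = v ∧ D.srcE (ω.edge ⟨j, h2⟩) = v) ∨
       (D.tgtE (ω.edge ⟨j - 1, by omega⟩) = v ∧ D.tgtE (ω.edge ⟨j, h2⟩) = v))) ∨
  (Multigraph.Walk.IsClosed ω ∧ Multigraph.Walk.src ω = v ∧
    ∃ h : 0 < ω.len,
      ((D.srcE (ω.edge ⟨ω.len - 1, by omega⟩) = v ∧ D.srcE (ω.edge ⟨0, h⟩) = v) ∨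
       (D.tgtE (ω.edge ⟨ω.len - 1, by omega⟩) = v ∧ D.tgtE (ω.edge ⟨0, h⟩) = v)))


namespace Multigraph

namespace Walk

variable {V E C : Type} {G : Multigraph V E}

/-- Total vertex accessor. -/
def vtx (p : G.Walk) (i : ℕ) : V := p.vert ⟨min i p.len, by omega⟩

/-- Total edge accessor with default. -/
def edg (p : G.Walk) (d : E) (i : ℕ) : E := if h : i < p.len then p.edge ⟨i, h⟩ else d

theorem vert_eq_vtx (p : G.Walk) (j : Fin (p.len + 1)) : p.vert j = p.vtx j.val := by
  have : min j.val p.len = j.val := Nat.min_eq_left (by omega)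
  simp only [vtx]
  congr 1
  exact Fin.ext this.symm

theorem vtx_eq (p : G.Walk) {i : ℕ} (h : i ≤ p.len) :
    p.vtx i = p.vert ⟨i, by omega⟩ := (p.vert_eq_vtx ⟨i, by omega⟩).symm

theorem edge_eq_edg (p : G.Walk) (d : E) (j : Fin p.len) : p.edge j = p.edg d j.val := by
  simp [edg, j.isLt]

theorem edg_eq (p : G.Walk) (d : E) {i : ℕ} (h : i < p.len) :
    p.edg d i = p.edge ⟨i, h⟩ := by simp [edg, h]

theorem src_eq_vtx (p : G.Walk) : p.src = p.vtx 0 := vert_eq_vtx p _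

theorem tgt_eq_vtx (p : G.Walk) : p.tgt = p.vtx p.len := vert_eq_vtx p _

theorem incs' (p : G.Walk) (d : E) {i : ℕ} (h : i < p.len) (w : V) :
    G.inc (p.edg d i) w ↔ (w = p.vtx i ∨ w = p.vtx (i + 1)) := by
  rw [p.edg_eq d h, p.vtx_eq (show i ≤ p.len by omega), p.vtx_eq (show i+1 ≤ p.len by omega)]
  exact p.incs i h w

theorem adj_ne (p : G.Walk) {i : ℕ} (h : i < p.len) : p.vtx i ≠ p.vtx (i + 1) := by
  obtain ⟨a, b, hab, hiff⟩ := G.exists_two (p.edge ⟨i, h⟩)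
  have ha := (hiff a).mpr (Or.inl rfl)
  have hb := (hiff b).mpr (Or.inr rfl)
  rw [p.incs i h a] at ha
  rw [p.incs i h b] at hb
  rw [← p.vtx_eq (show i ≤ p.len by omega), ← p.vtx_eq (i := i+1) (show i+1 ≤ p.len by omega)] at ha hb
  intro hcon
  rcases ha with ha | ha <;> rcases hb with hb | hb <;>
    exact hab (by rw [ha, hb] <;> rw [hcon] <;> rfl)

/-- two equal edges (of possibly different walks) have matching endpoints -/
theorem endpoints_eq {p q : G.Walk} (d : E) {i j : ℕ} (hi : i < p.len) (hj : j < q.len)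
    (h : p.edg d i = q.edg d j) :
    (p.vtx i = q.vtx j ∧ p.vtx (i+1) = q.vtx (j+1)) ∨
    (p.vtx i = q.vtx (j+1) ∧ p.vtx (i+1) = q.vtx j) := by
  have h1 : G.inc (q.edg d j) (p.vtx i) := by
    rw [← h]; exact (p.incs' d hi _).mpr (Or.inl rfl)
  have h2 : G.inc (q.edg d j) (p.vtx (i+1)) := by
    rw [← h]; exact (p.incs' d hi _).mpr (Or.inr rfl)
  rw [q.incs' d hj] at h1 h2
  have hne := p.adj_ne hi
  rcases h1 with h1 | h1 <;> rcases h2 with h2 | h2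
  · exact absurd (h1.trans h2.symm) hne
  · exact Or.inl ⟨h1, h2⟩
  · exact Or.inr ⟨h1, h2⟩
  · exact absurd (h1.trans h2.symm) hne

theorem isSimple_iff (p : G.Walk) (d : E) : p.IsSimple ↔
    (∀ i j : ℕ, i < j → j < p.len → p.edg d i ≠ p.edg d j) ∧
    (∀ i j : ℕ, i < j → j ≤ p.len → p.vtx i = p.vtx j → i = 0 ∧ j = p.len) := by
  constructor
  · rintro ⟨he, hv⟩
    constructor
    · intro i j hij hj hc
      rw [p.edg_eq d (by omega), p.edg_eq d hj] at hc
      exact absurd (he i j (by omega) hj hc) (by omega)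
    · intro i j hij hj hc
      rw [p.vtx_eq (show i ≤ p.len by omega), p.vtx_eq (show j ≤ p.len by omega)] at hc
      exact hv i j (by omega) (by omega) hij hc
  · rintro ⟨he, hv⟩
    constructor
    · intro i j hi hj hc
      by_contra hne
      rcases Nat.lt_or_ge i j with h' | h'
      · exact he i j h' hj (by rw [p.edg_eq d hi, p.edg_eq d hj]; exact hc)
      · have h'' : j < i := by omega
        exact he j i h'' hi (by rw [p.edg_eq d hi, p.edg_eq d hj]; exact hc.symm)
    · intro i j hi hj hij hc
      exact hv i j hij (by omega) (by rw [p.vtx_eq (show i ≤ p.len by omega), p.vtx_eq (show j ≤ p.len by omega)]; exact hc)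

theorem cuspIdx_iff (p : G.Walk) (d : E) (j : ℕ) : p.CuspIdx c j ↔
    (0 < j ∧ j < p.len ∧ p.edg d (j-1) ≠ p.edg d j ∧
      c (p.edg d (j-1)) (p.vtx j) = c (p.edg d j) (p.vtx j)) ∨
    (j = 0 ∧ p.vtx 0 = p.vtx p.len ∧ 0 < p.len ∧ p.edg d (p.len - 1) ≠ p.edg d 0 ∧
      c (p.edg d (p.len - 1)) (p.vtx 0) = c (p.edg d 0) (p.vtx 0)) := by
  constructor
  · rintro ⟨u, α, hc⟩
    rcases hc with ⟨h1, h2, hu, hne, hc1, hc2⟩ | ⟨h0, hcl, hu, hlen, hne, hc1, hc2⟩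
    · left
      refine ⟨h1, h2, ?_, ?_⟩
      · rw [p.edg_eq d (by omega), p.edg_eq d h2]; exact hne
      · rw [p.edg_eq d (by omega), p.edg_eq d h2, p.vtx_eq (show j ≤ p.len by omega), hu, hc1, hc2]
    · right
      refine ⟨h0, ?_, hlen, ?_, ?_⟩
      · rw [p.vtx_eq (show 0 ≤ p.len by omega), p.vtx_eq (le_refl _)]
        exact hcl
      · rw [p.edg_eq d (by omega), p.edg_eq d hlen]; exact hne
      · have : p.vtx 0 = u := by rw [← hu, src]; exact p.vtx_eq (i := 0) (by omega)
        rw [p.edg_eq d (by omega), p.edg_eq d hlen, this, hc1, hc2]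
  · rintro (⟨h1, h2, hne, hc⟩ | ⟨h0, hcl, hlen, hne, hc⟩)
    · rw [p.edg_eq d (i := j-1) (by omega), p.edg_eq d h2] at hne hc
      refine ⟨p.vtx j, c (p.edge ⟨j, h2⟩) (p.vtx j), Or.inl ⟨h1, h2, ?_, hne, hc, rfl⟩⟩
      exact (p.vtx_eq (show j ≤ p.len by omega)).symm
    · rw [p.edg_eq d (i := p.len - 1) (by omega), p.edg_eq d hlen] at hne hc
      refine ⟨p.vtx 0, c (p.edge ⟨0, hlen⟩) (p.vtx 0), Or.inr ⟨h0, ?_, ?_, hlen, hne, hc, rfl⟩⟩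
      · rw [IsClosed, src_eq_vtx, tgt_eq_vtx]; exact hcl
      · rw [src_eq_vtx]

theorem cuspIdx_lt {p : G.Walk} {c : E → V → C} {j : ℕ} (h : p.CuspIdx c j) : j < p.len := by
  rcases h with ⟨u, α, hc⟩
  rcases hc with ⟨h1, h2, _⟩ | ⟨h0, _, _, hlen, _⟩
  · exact h2
  · omega

theorem cuspSet_finite (p : G.Walk) (c : E → V → C) : {j : ℕ | p.CuspIdx c j}.Finite :=
  Set.Finite.subset (Set.finite_Iio p.len) (fun _ hj => cuspIdx_lt hj)

end Walk

end Multigraph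

namespace Multigraph

namespace Walk

variable {V E C : Type} {G : Multigraph V E}

/-- Concatenation of two walks. -/
def app (A B : G.Walk) (h : A.tgt = B.src) : G.Walk where
  len := A.len + B.len
  vert := fun i => if i.val ≤ A.len then A.vtx i.val else B.vtx (i.val - A.len)
  edge := fun i => if hi : i.val < A.len then A.edge ⟨i.val, hi⟩ else B.edge ⟨i.val - A.len, by omega⟩
  incs := by
    intro i hi w
    dsimp only
    by_cases h1 : i < A.len
    · rw [dif_pos h1, if_pos (show i ≤ A.len by omega)]
      rw [A.incs i h1 w, ← A.vtx_eq (show i ≤ A.len by omega),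
        ← A.vtx_eq (i := i+1) (show i+1 ≤ A.len by omega)]
      by_cases h2 : i + 1 ≤ A.len
      · rw [if_pos h2]
      · omega
    · rw [dif_neg h1]
      have hB := B.incs (i - A.len) (by omega) w
      rw [← B.vtx_eq (i := i - A.len) (show i - A.len ≤ B.len by omega),
          ← B.vtx_eq (i := i - A.len + 1) (show i - A.len + 1 ≤ B.len by omega)] at hB
      rw [hB]
      have hv1 : (if i ≤ A.len then A.vtx i else B.vtx (i - A.len)) = B.vtx (i - A.len) := by
        by_cases h2 : i ≤ A.len
        · have hi2 : i = A.len := by omega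
          subst hi2
          rw [if_pos h2, Nat.sub_self, ← tgt_eq_vtx, ← src_eq_vtx, h]
        · rw [if_neg h2]
      have hv2 : (if i + 1 ≤ A.len then A.vtx (i+1) else B.vtx (i + 1 - A.len))
          = B.vtx (i - A.len + 1) := by
        rw [if_neg (by omega), show i + 1 - A.len = i - A.len + 1 by omega]
      rw [hv1, hv2]

theorem app_len (A B : G.Walk) (h : A.tgt = B.src) : (A.app B h).len = A.len + B.len := rfl

theorem app_vtx_left (A B : G.Walk) (h : A.tgt = B.src) {i : ℕ} (hi : i ≤ A.len) :
    (A.app B h).vtx i = A.vtx i := by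
  rw [vtx_eq _ (show i ≤ (A.app B h).len by rw [app_len]; omega)]
  show (if _ ≤ A.len then _ else _) = _
  rw [if_pos hi]

theorem app_vtx_right (A B : G.Walk) (h : A.tgt = B.src) {i : ℕ} (hi : A.len ≤ i)
    (hi2 : i ≤ A.len + B.len) : (A.app B h).vtx i = B.vtx (i - A.len) := by
  rw [vtx_eq _ (show i ≤ (A.app B h).len by rw [app_len]; omega)]
  show (if _ ≤ A.len then _ else _) = _
  by_cases h2 : i ≤ A.len
  · have hi3 : i = A.len := by omega
    subst hi3
    rw [if_pos h2, Nat.sub_self, ← tgt_eq_vtx, ← src_eq_vtx]; exact h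
  · rw [if_neg h2]

theorem app_edg_left (A B : G.Walk) (h : A.tgt = B.src) (d : E) {i : ℕ} (hi : i < A.len) :
    (A.app B h).edg d i = A.edg d i := by
  rw [edg_eq _ d (show i < (A.app B h).len by rw [app_len]; omega), edg_eq _ d hi]
  show dite _ _ _ = _
  rw [dif_pos hi]

theorem app_edg_right (A B : G.Walk) (h : A.tgt = B.src) (d : E) {i : ℕ} (hi : A.len ≤ i)
    (hi2 : i < A.len + B.len) : (A.app B h).edg d i = B.edg d (i - A.len) := by
  rw [edg_eq _ d (show i < (A.app B h).len by rw [app_len]; omega),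
    edg_eq _ d (show i - A.len < B.len by omega)]
  show dite _ _ _ = _
  rw [dif_neg (show ¬ i < A.len by omega)]

/-- Subwalk from position `a` to position `b`. -/
def seg (p : G.Walk) (a b : ℕ) (hab : a ≤ b) (hb : b ≤ p.len) : G.Walk where
  len := b - a
  vert := fun i => p.vtx (a + i.val)
  edge := fun i => p.edge ⟨a + i.val, by omega⟩
  incs := by
    intro i hi w
    dsimp only
    have hP := p.incs (a + i) (by omega) w
    rw [← p.vtx_eq (i := a + i) (show a + i ≤ p.len by omega),
        ← p.vtx_eq (i := a + i + 1) (show a + i + 1 ≤ p.len by omega)] at hP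
    exact hP

theorem seg_len (p : G.Walk) (a b : ℕ) (hab : a ≤ b) (hb : b ≤ p.len) :
    (p.seg a b hab hb).len = b - a := rfl

theorem seg_vtx (p : G.Walk) (a b : ℕ) (hab : a ≤ b) (hb : b ≤ p.len) {i : ℕ} (hi : i ≤ b - a) :
    (p.seg a b hab hb).vtx i = p.vtx (a + i) := by
  rw [vtx_eq _ (show i ≤ (p.seg a b hab hb).len from hi)]
  rfl

theorem seg_edg (p : G.Walk) (a b : ℕ) (hab : a ≤ b) (hb : b ≤ p.len) (d : E) {i : ℕ}
    (hi : i < b - a) : (p.seg a b hab hb).edg d i = p.edg d (a + i) := by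
  rw [edg_eq _ d (show i < (p.seg a b hab hb).len from hi), edg_eq _ d (by omega)]
  rfl

/-- Reversal of a walk. -/
def rev (p : G.Walk) : G.Walk where
  len := p.len
  vert := fun i => p.vtx (p.len - i.val)
  edge := fun i => p.edge ⟨p.len - 1 - i.val, by omega⟩
  incs := by
    intro i hi w
    dsimp only
    have hP := p.incs (p.len - 1 - i) (by omega) w
    rw [← p.vtx_eq (i := p.len - 1 - i) (show p.len - 1 - i ≤ p.len by omega),
        ← p.vtx_eq (i := p.len - 1 - i + 1) (show p.len - 1 - i + 1 ≤ p.len by omega)] at hP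
    rw [hP]
    have e1 : p.len - 1 - i + 1 = p.len - i := by omega
    have e2 : p.len - 1 - i = p.len - (i + 1) := by omega
    rw [e1, e2]
    exact or_comm

theorem rev_len (p : G.Walk) : (rev p).len = p.len := rfl

theorem rev_vtx (p : G.Walk) {i : ℕ} (hi : i ≤ p.len) : (rev p).vtx i = p.vtx (p.len - i) := by
  rw [vtx_eq _ (show i ≤ (rev p).len from hi)]
  rfl

theorem rev_edg (p : G.Walk) (d : E) {i : ℕ} (hi : i < p.len) :
    (rev p).edg d i = p.edg d (p.len - 1 - i) := by
  rw [edg_eq _ d (show i < (rev p).len from hi), edg_eq _ d (by omega)]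
  rfl

theorem app_src (A B : G.Walk) (h : A.tgt = B.src) : (A.app B h).src = A.src := by
  rw [src_eq_vtx, src_eq_vtx, app_vtx_left _ _ _ (by omega)]

theorem app_tgt (A B : G.Walk) (h : A.tgt = B.src) : (A.app B h).tgt = B.tgt := by
  rw [tgt_eq_vtx, tgt_eq_vtx, app_len, app_vtx_right _ _ _ (by omega) (by omega),
    Nat.add_sub_cancel_left]

theorem rev_src (p : G.Walk) : (rev p).src = p.tgt := by
  rw [src_eq_vtx, tgt_eq_vtx, rev_vtx p (by omega), Nat.sub_zero]

theorem rev_tgt (p : G.Walk) : (rev p).tgt = p.src := by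
  rw [src_eq_vtx, tgt_eq_vtx, rev_len, rev_vtx p (le_refl _), Nat.sub_self]

theorem seg_src (p : G.Walk) (a b : ℕ) (hab : a ≤ b) (hb : b ≤ p.len) :
    (p.seg a b hab hb).src = p.vtx a := by
  rw [src_eq_vtx, seg_vtx p a b hab hb (by omega), Nat.add_zero]

theorem seg_tgt (p : G.Walk) (a b : ℕ) (hab : a ≤ b) (hb : b ≤ p.len) :
    (p.seg a b hab hb).tgt = p.vtx b := by
  rw [tgt_eq_vtx, seg_len, seg_vtx p a b hab hb (by omega)]
  congr 1
  omega

end Walk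

end Multigraph

namespace Multigraph

namespace Walk

variable {V E C : Type} {G : Multigraph V E} {c : E → V → C}

theorem isClosed_iff (p : G.Walk) : p.IsClosed ↔ p.vtx 0 = p.vtx p.len := by
  rw [IsClosed, src_eq_vtx, tgt_eq_vtx]

theorem rev_isSimple {p : G.Walk} (d : E) (h : p.IsSimple) : (rev p).IsSimple := by
  rw [isSimple_iff _ d] at h ⊢
  obtain ⟨he, hv⟩ := h
  constructor
  · intro i j hij hj hc
    rw [rev_len] at hj
    rw [rev_edg p d (by omega), rev_edg p d (by omega)] at hc
    exact he (p.len - 1 - j) (p.len - 1 - i) (by omega) (by omega) hc.symm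
  · intro i j hij hj hc
    rw [rev_len] at hj
    rw [rev_vtx p (by omega), rev_vtx p (by omega)] at hc
    have := hv (p.len - j) (p.len - i) (by omega) (by omega) hc.symm
    have hrl : (rev p).len = p.len := rev_len p
    omega

theorem memV_iff (p : G.Walk) (x : V) : p.MemV x ↔ ∃ i, i ≤ p.len ∧ p.vtx i = x := by
  constructor
  · rintro ⟨i, h, rfl⟩
    exact ⟨i, by omega, p.vtx_eq (by omega)⟩
  · rintro ⟨i, h, rfl⟩
    exact ⟨i, by omega, (p.vtx_eq (by omega)).symm⟩

theorem memE_iff (p : G.Walk) (d : E) (f : E) : p.MemE f ↔ ∃ i, i < p.len ∧ p.edg d i = f := by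
  constructor
  · rintro ⟨i, h, rfl⟩
    exact ⟨i, h, p.edg_eq d h⟩
  · rintro ⟨i, h, rfl⟩
    exact ⟨i, h, (p.edg_eq d h).symm⟩

theorem hasCuspAtV_iff (p : G.Walk) (u : V) :
    p.HasCuspAtV c u ↔ ∃ j, p.CuspIdx c j ∧ p.vtx j = u := by
  constructor
  · rintro ⟨j, α, hc⟩
    refine ⟨j, ⟨u, α, hc⟩, ?_⟩
    rcases hc with ⟨h1, h2, hu, _⟩ | ⟨h0, _, hu, _⟩
    · rw [← hu]; exact p.vtx_eq (by omega)
    · rw [← hu, h0, src_eq_vtx]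
  · rintro ⟨j, ⟨u', α, hc⟩, hj⟩
    have : u' = u := by
      rcases hc with ⟨h1, h2, hu, _⟩ | ⟨h0, _, hu, _⟩
      · rw [← hu, ← hj]; exact (p.vtx_eq (by omega)).symm
      · rw [← hu, ← hj, h0, src_eq_vtx]
    exact ⟨j, α, this ▸ hc⟩

theorem cuspIdx_rev_iff (p : G.Walk) (d : E) (hcl : p.vtx 0 = p.vtx p.len) (j : ℕ) :
    (rev p).CuspIdx c j ↔
      (j = 0 ∧ p.CuspIdx c 0) ∨ (0 < j ∧ j < p.len ∧ p.CuspIdx c (p.len - j)) := by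
  rw [cuspIdx_iff (rev p) d j, cuspIdx_iff p d 0, cuspIdx_iff p d (p.len - j)]
  constructor
  · rintro (⟨h1, h2, hne, hc⟩ | ⟨h0, _, hlen, hne, hc⟩)
    · right
      rw [rev_len] at h2
      rw [rev_edg p d (show j - 1 < p.len by omega), rev_edg p d (show j < p.len by omega)] at hne
      rw [rev_edg p d (show j - 1 < p.len by omega), rev_edg p d (show j < p.len by omega),
        rev_vtx p (show j ≤ p.len by omega)] at hc
      have e1 : p.len - 1 - (j - 1) = p.len - j := by omega
      have e2 : p.len - 1 - j = p.len - j - 1 := by omega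
      rw [e1, e2] at hne hc
      exact ⟨h1, h2, Or.inl ⟨by omega, by omega, hne.symm, hc.symm⟩⟩
    · left
      rw [rev_len] at hlen hne hc
      rw [rev_edg p d (show p.len - 1 < p.len by omega), rev_edg p d (show 0 < p.len by omega)] at hne
      rw [rev_edg p d (show p.len - 1 < p.len by omega), rev_edg p d (show 0 < p.len by omega),
        rev_vtx p (show (0:ℕ) ≤ p.len by omega)] at hc
      have e1 : p.len - 1 - (p.len - 1) = 0 := by omega
      have e2 : p.len - 1 - 0 = p.len - 1 := by omega
      rw [e1, e2] at hne hc
      rw [Nat.sub_zero, ← hcl] at hc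
      exact ⟨h0, Or.inr ⟨rfl, hcl, hlen, hne.symm, hc.symm⟩⟩
  · rintro (⟨h0, (⟨h1, _, _⟩ | ⟨_, _, hlen, hne, hc⟩)⟩ | ⟨h1, h2, (⟨hk1, hk2, hne, hc⟩ | ⟨hk0, _⟩)⟩)
    · omega
    · right
      refine ⟨h0, ?_, ?_, ?_, ?_⟩
      · rw [rev_len, rev_vtx p (le_refl _), rev_vtx p (by omega), Nat.sub_self, Nat.sub_zero]
        exact hcl.symm
      · rw [rev_len]; exact hlen
      · rw [rev_len, rev_edg p d (by omega), rev_edg p d (by omega)]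
        have e1 : p.len - 1 - (p.len - 1) = 0 := by omega
        have e2 : p.len - 1 - 0 = p.len - 1 := by omega
        rw [e1, e2]
        exact hne.symm
      · rw [rev_len, rev_edg p d (by omega), rev_edg p d (by omega),
          rev_vtx p (show (0:ℕ) ≤ p.len by omega)]
        have e1 : p.len - 1 - (p.len - 1) = 0 := by omega
        have e2 : p.len - 1 - 0 = p.len - 1 := by omega
        rw [e1, e2, Nat.sub_zero, ← hcl]
        exact hc.symm
    · left
      refine ⟨h1, ?_, ?_, ?_⟩
      · rw [rev_len]; exact h2
      · rw [rev_edg p d (show j - 1 < p.len by omega), rev_edg p d (show j < p.len by omega)]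
        have e1 : p.len - 1 - (j - 1) = p.len - j := by omega
        have e2 : p.len - 1 - j = p.len - j - 1 := by omega
        rw [e1, e2]
        exact hne.symm
      · rw [rev_edg p d (show j - 1 < p.len by omega), rev_edg p d (show j < p.len by omega),
          rev_vtx p (show j ≤ p.len by omega)]
        have e1 : p.len - 1 - (j - 1) = p.len - j := by omega
        have e2 : p.len - 1 - j = p.len - j - 1 := by omega
        rw [e1, e2]
        exact hc.symm
    · omega

theorem ncard_le_of_inj (S T : Set ℕ) (hS : S.Finite) (hT : T.Finite) (f : ℕ → ℕ)
    (hinj : Set.InjOn f S) (hmap : ∀ j ∈ S, f j ∈ T) : S.ncard ≤ T.ncard := by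
  have h1 : S.ncard = (f '' S).ncard := (Set.ncard_image_of_injOn hinj).symm
  rw [h1]
  exact Set.ncard_le_ncard (by rintro _ ⟨j, hj, rfl⟩; exact hmap j hj) hT

theorem ncard_lt_of_inj (S T : Set ℕ) (hS : S.Finite) (hT : T.Finite) (f : ℕ → ℕ)
    (hinj : Set.InjOn f S) (hmap : ∀ j ∈ S, f j ∈ T) (jc : ℕ) (hjc : jc ∈ T)
    (hmiss : ∀ j ∈ S, f j ≠ jc) : S.ncard < T.ncard := by
  have h1 : S.ncard = (f '' S).ncard := (Set.ncard_image_of_injOn hinj).symm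
  have h2 : f '' S ⊆ T \ {jc} := by
    rintro _ ⟨j, hj, rfl⟩
    exact ⟨hmap j hj, by simpa using hmiss j hj⟩
  calc S.ncard = (f '' S).ncard := h1
    _ ≤ (T \ {jc}).ncard := Set.ncard_le_ncard h2 hT.diff
    _ < T.ncard := Set.ncard_diff_singleton_lt_of_mem hjc hT

theorem cuspIdx_rev_of (p : G.Walk) (d : E) (hcl : p.vtx 0 = p.vtx p.len) {k : ℕ}
    (hk : p.CuspIdx c k) : (rev p).CuspIdx c (if k = 0 then 0 else p.len - k) := by
  have hlt := cuspIdx_lt hk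
  by_cases h0 : k = 0
  · rw [if_pos h0, cuspIdx_rev_iff p d hcl]
    exact Or.inl ⟨rfl, h0 ▸ hk⟩
  · rw [if_neg h0, cuspIdx_rev_iff p d hcl]
    right
    refine ⟨by omega, by omega, ?_⟩
    rw [show p.len - (p.len - k) = k by omega]
    exact hk

theorem cuspCount_rev (p : G.Walk) (d : E) (hcl : p.vtx 0 = p.vtx p.len) :
    (rev p).cuspCount c = p.cuspCount c := by
  apply le_antisymm
  · apply ncard_le_of_inj _ _ (cuspSet_finite _ c) (cuspSet_finite _ c)
      (fun j => if j = 0 then 0 else p.len - j)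
    · intro a ha b hb hab
      simp only [Set.mem_setOf_eq] at ha hb
      have la := cuspIdx_lt ha
      have lb := cuspIdx_lt hb
      rw [rev_len] at la lb
      by_cases h1 : a = 0 <;> by_cases h2 : b = 0 <;> simp [h1, h2] at hab ⊢ <;> omega
    · intro j hj
      simp only [Set.mem_setOf_eq] at hj ⊢
      rw [cuspIdx_rev_iff p d hcl] at hj
      rcases hj with ⟨h0, hc⟩ | ⟨h1, h2, hc⟩
      · simpa [h0] using hc
      · simpa [show ¬ (j = 0) by omega] using hc
  · apply ncard_le_of_inj _ _ (cuspSet_finite _ c) (cuspSet_finite _ c)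
      (fun j => if j = 0 then 0 else p.len - j)
    · intro a ha b hb hab
      simp only [Set.mem_setOf_eq] at ha hb
      have la := cuspIdx_lt ha
      have lb := cuspIdx_lt hb
      by_cases h1 : a = 0 <;> by_cases h2 : b = 0 <;> simp [h1, h2] at hab ⊢ <;> omega
    · intro j hj
      simp only [Set.mem_setOf_eq] at hj ⊢
      exact cuspIdx_rev_of p d hcl hj

end Walk

end Multigraph

namespace Multigraph

open Walk

variable {V E C : Type} {G : Multigraph V E}

set_option maxHeartbeats 4000000 in
theorem cusp_min_aux (c : E → V → C)
    (ω : G.Walk) (v x y κ l : V) (e : E)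
    (ix iy : ℕ) (hix0 : 0 < ix) (hixy : ix ≤ iy) (hiy : iy < ω.len)
    (hsimp : ω.IsSimple) (hclosed : ω.vtx 0 = ω.vtx ω.len) (hsrc : ω.vtx 0 = v)
    (hnocusp : ¬ ω.HasCuspAtV c v)
    (hx : ω.vtx ix = x) (hy : ω.vtx iy = y)
    (hxv : x ≠ v) (hyv : y ≠ v)
    (hjc : ∃ j : ℕ, ix ≤ j ∧ j ≤ iy ∧ ω.CuspIdx c j)
    (hends : ∀ w : V, G.inc e w ↔ w = κ ∨ w = l)
    (ρ χ ρe χe r : G.Walk)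
    (hρsrc : ρ.vtx 0 = x) (hρtgt : ρ.vtx ρ.len = κ)
    (hχsrc : χ.vtx 0 = y) (hχtgt : χ.vtx χ.len = κ)
    (hρe : Walk.ExtendsBy ρe ρ e l)
    (hρe_simple : ρe.IsSimple) (hρe_cf : ρe.CuspFree c)
    (hρe_start : c (ρe.edg e 0) x ≠ c (ω.edg e (ix - 1)) x)
    (hχe : Walk.ExtendsBy χe χ e l)
    (hχe_simple : χe.IsSimple) (hχe_cf : χe.CuspFree c)
    (hχe_start : c (χe.edg e 0) y ≠ c (ω.edg e iy) y)
    (hρarc : ∀ a, a ≤ ρ.len → ∀ j, j ≤ ω.len → (j ≤ ix ∨ iy ≤ j) → ω.vtx j = ρ.vtx a →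
      ρ.vtx a = x ∨ ρ.vtx a = y)
    (hχarc : ∀ a, a ≤ χ.len → ∀ j, j ≤ ω.len → (j ≤ ix ∨ iy ≤ j) → ω.vtx j = χ.vtx a →
      χ.vtx a = x ∨ χ.vtx a = y)
    (hrlen : 1 ≤ r.len) (hre0 : r.edg e 0 = e)
    (hrsrc : r.vtx 0 = κ) (hrl : r.vtx 1 = l)
    (hrsimple : r.IsSimple) (hrcf : r.CuspFree c)
    (hpρ : ∀ i, 1 ≤ i → i ≤ r.len → ∀ a, a ≤ ρ.len → ρ.vtx a ≠ r.vtx i)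
    (hpχ : ∀ i, 1 ≤ i → i ≤ r.len → ∀ a, a ≤ χ.len → χ.vtx a ≠ r.vtx i)
    (i₁ m : ℕ) (h1i : 1 ≤ i₁) (hi1r : i₁ ≤ r.len)
    (him : iy ≤ m) (hmn : m ≤ ω.len)
    (hwm : ω.vtx m = r.vtx i₁)
    (hint : ∀ i, 1 ≤ i → i < i₁ → ∀ j, j ≤ ω.len → (j ≤ ix ∨ iy ≤ j) → ω.vtx j ≠ r.vtx i)
    (hlast : m = ω.len → c (r.edg e (i₁ - 1)) (r.vtx i₁) ≠ c (ω.edg e 0) v) :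
    (∃ δ : G.Walk, δ.IsCycle ∧ δ.CuspFree c ∧ δ.MemE e) ∨
    (∃ ω' : G.Walk, ω'.IsCycle ∧ ω'.src = v ∧ ¬ ω'.HasCuspAtV c v ∧
        ω'.cuspCount c < ω.cuspCount c) := by
  -- notation
  set n := ω.len with hn
  -- basic facts
  have hn2 : 2 ≤ n := by omega
  have hvinj : ∀ i j, i < j → j ≤ n → ω.vtx i = ω.vtx j → i = 0 ∧ j = n :=
    ((isSimple_iff ω e).mp hsimp).2
  have heinjω : ∀ i j, i < j → j < n → ω.edg e i ≠ ω.edg e j :=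
    ((isSimple_iff ω e).mp hsimp).1
  have hnocusp0 : ¬ ω.CuspIdx c 0 := by
    intro h
    exact hnocusp ((hasCuspAtV_iff ω v).mpr ⟨0, h, hsrc⟩)
  have hxpos : ∀ j, j ≤ n → ω.vtx j = x → j = ix := by
    intro j hj hjx
    rcases Nat.lt_trichotomy j ix with h | h | h
    · have := hvinj j ix h (by omega) (by rw [hjx, hx])
      omega
    · exact h
    · have := hvinj ix j h (by omega) (by rw [hjx, hx])
      omega
  have hypos : ∀ j, j ≤ n → ω.vtx j = y → j = iy := by
    intro j hj hjy
    rcases Nat.lt_trichotomy j iy with h | h | h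
    · have := hvinj j iy h (by omega) (by rw [hjy, hy])
      omega
    · exact h
    · have := hvinj iy j h (by omega) (by rw [hjy, hy])
      omega
  have hvpos : ∀ j, j ≤ n → ω.vtx j = v → j = 0 ∨ j = n := by
    intro j hj hjv
    by_cases h0 : j = 0
    · exact Or.inl h0
    · right
      have := hvinj 0 j (by omega) hj (by rw [hjv, hsrc])
      omega
  -- facts about ρe / χe
  obtain ⟨hρelen, hρev, hρee, hρelast, hρevlast⟩ := hρe
  obtain ⟨hχelen, hχev, hχee, hχelast, hχevlast⟩ := hχe
  have hρev' : ∀ a, a ≤ ρ.len → ρe.vtx a = ρ.vtx a := by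
    intro a ha
    rw [vtx_eq _ (show a ≤ ρe.len by omega), vtx_eq _ (show a ≤ ρ.len by omega)]
    exact hρev a (by omega)
  have hχev' : ∀ a, a ≤ χ.len → χe.vtx a = χ.vtx a := by
    intro a ha
    rw [vtx_eq _ (show a ≤ χe.len by omega), vtx_eq _ (show a ≤ χ.len by omega)]
    exact hχev a (by omega)
  have hρee' : ∀ a, a < ρ.len → ρe.edg e a = ρ.edg e a := by
    intro a ha
    rw [edg_eq _ e (show a < ρe.len by omega), edg_eq _ e ha]
    exact hρee a ha
  have hχee' : ∀ a, a < χ.len → χe.edg e a = χ.edg e a := by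
    intro a ha
    rw [edg_eq _ e (show a < χe.len by omega), edg_eq _ e ha]
    exact hχee a ha
  have hρelast' : ρe.edg e ρ.len = e := by
    rw [edg_eq _ e (show ρ.len < ρe.len by omega)]
    exact hρelast
  have hχelast' : χe.edg e χ.len = e := by
    rw [edg_eq _ e (show χ.len < χe.len by omega)]
    exact hχelast
  have hρevlast' : ρe.vtx (ρ.len + 1) = l := by
    rw [vtx_eq _ (show ρ.len + 1 ≤ ρe.len by omega)]
    exact hρevlast
  have hχevlast' : χe.vtx (χ.len + 1) = l := by
    rw [vtx_eq _ (show χ.len + 1 ≤ χe.len by omega)]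
    exact hχevlast
  -- l and κ facts
  have hlρ : ∀ a, a ≤ ρ.len → ρ.vtx a ≠ l := by
    intro a ha
    rw [← hrl]
    exact hpρ 1 (le_refl _) hrlen a ha
  have hlχ : ∀ a, a ≤ χ.len → χ.vtx a ≠ l := by
    intro a ha
    rw [← hrl]
    exact hpχ 1 (le_refl _) hrlen a ha
  -- all vertices of ρ pairwise distinct
  have hρvinj : ∀ a b, a < b → b ≤ ρ.len → ρ.vtx a ≠ ρ.vtx b := by
    intro a b hab hb hc
    rw [← hρev' a (by omega), ← hρev' b (by omega)] at hc
    have := ((isSimple_iff ρe e).mp hρe_simple).2 a b hab (by omega) hc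
    omega
  have hχvinj : ∀ a b, a < b → b ≤ χ.len → χ.vtx a ≠ χ.vtx b := by
    intro a b hab hb hc
    rw [← hχev' a (by omega), ← hχev' b (by omega)] at hc
    have := ((isSimple_iff χe e).mp hχe_simple).2 a b hab (by omega) hc
    omega
  have hρeinj : ∀ a b, a < b → b < ρ.len → ρ.edg e a ≠ ρ.edg e b := by
    intro a b hab hb hc
    rw [← hρee' a (by omega), ← hρee' b (by omega)] at hc
    exact ((isSimple_iff ρe e).mp hρe_simple).1 a b hab (by omega) hc
  have hχeinj : ∀ a b, a < b → b < χ.len → χ.edg e a ≠ χ.edg e b := by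
    intro a b hab hb hc
    rw [← hχee' a (by omega), ← hχee' b (by omega)] at hc
    exact ((isSimple_iff χe e).mp hχe_simple).1 a b hab (by omega) hc
  have hρnote : ∀ a, a < ρ.len → ρ.edg e a ≠ e := by
    intro a ha hc
    have hc2 : ρe.edg e a = ρe.edg e ρ.len := by rw [hρee' a ha, hρelast']; exact hc
    exact ((isSimple_iff ρe e).mp hρe_simple).1 a ρ.len ha (by omega) hc2
  have hχnote : ∀ a, a < χ.len → χ.edg e a ≠ e := by
    intro a ha hc
    have hc2 : χe.edg e a = χe.edg e χ.len := by rw [hχee' a ha, hχelast']; exact hc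
    exact ((isSimple_iff χe e).mp hχe_simple).1 a χ.len ha (by omega) hc2
  -- r vertices pairwise distinct
  have hrvinj : ∀ a b, a < b → b ≤ r.len → r.vtx a ≠ r.vtx b := by
    intro a b hab hb hc
    have h2 := ((isSimple_iff r e).mp hrsimple).2 a b hab hb hc
    -- then a = 0 and b = r.len, so κ = r.vtx r.len, contradicting hpρ
    have : ρ.vtx ρ.len ≠ r.vtx r.len := hpρ r.len (by omega) (le_refl _) ρ.len (le_refl _)
    rw [hρtgt, ← hrsrc] at this
    exact this (h2.1 ▸ h2.2 ▸ hc)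
  have hreinj : ∀ a b, a < b → b < r.len → r.edg e a ≠ r.edg e b :=
    ((isSimple_iff r e).mp hrsimple).1
  -- key non-x/y facts about the endpoint w = r.vtx i₁
  have hwx : r.vtx i₁ ≠ x := by
    intro hc
    exact hpρ i₁ h1i hi1r 0 (by omega) (by rw [hρsrc, hc])
  have hwy : r.vtx i₁ ≠ y := by
    intro hc
    exact hpχ i₁ h1i hi1r 0 (by omega) (by rw [hχsrc, hc])
  have hwκ : r.vtx i₁ ≠ κ := by
    intro hc
    exact hpρ i₁ h1i hi1r ρ.len (le_refl _) (by rw [hρtgt, hc])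
  have hmgt : iy < m := by
    rcases Nat.lt_or_ge iy m with h | h
    · exact h
    · have : m = iy := by omega
      subst this
      exact absurd (hy ▸ hwm.symm) hwy
  -- κ = x implies ρ.len = 0
  have hκx : κ = x → ρ.len = 0 := by
    intro hc
    by_contra hne
    exact hρvinj 0 ρ.len (by omega) (le_refl _) (by rw [hρsrc, hρtgt, hc])
  have hκy : κ = y → χ.len = 0 := by
    intro hc
    by_contra hne
    exact hχvinj 0 χ.len (by omega) (le_refl _) (by rw [hχsrc, hχtgt, hc])
  -- edge-distinctness lemmas
  have Eρω : ∀ a, a < ρ.len → ∀ k, k < n → (k < ix ∨ iy ≤ k) → ρ.edg e a ≠ ω.edg e k := by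
    intro a ha k hk hkr hc
    rcases endpoints_eq e ha hk hc with ⟨h1, h2⟩ | ⟨h1, h2⟩
    · have e1 := hρarc a (by omega) k (by omega) (by omega) h1.symm
      have e2 := hρarc (a+1) (by omega) (k+1) (by omega) (by omega) h2.symm
      rw [h1] at e1
      rw [h2] at e2
      rcases e1 with e1 | e1 <;> rcases e2 with e2 | e2
      · have := hxpos k (by omega) e1
        have := hxpos (k+1) (by omega) e2
        omega
      · have := hxpos k (by omega) e1
        have := hypos (k+1) (by omega) e2
        omega
      · have := hypos k (by omega) e1
        have := hxpos (k+1) (by omega) e2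
        omega
      · have := hypos k (by omega) e1
        have := hypos (k+1) (by omega) e2
        omega
    · have e1 := hρarc a (by omega) (k+1) (by omega) (by omega) h1.symm
      have e2 := hρarc (a+1) (by omega) k (by omega) (by omega) h2.symm
      rw [h1] at e1
      rw [h2] at e2
      rcases e1 with e1 | e1 <;> rcases e2 with e2 | e2
      · have := hxpos (k+1) (by omega) e1
        have := hxpos k (by omega) e2
        omega
      · have := hxpos (k+1) (by omega) e1
        have := hypos k (by omega) e2
        omega
      · have := hypos (k+1) (by omega) e1
        have := hxpos k (by omega) e2
        omega
      · have := hypos (k+1) (by omega) e1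
        have := hypos k (by omega) e2
        omega
  
  have Eχω : ∀ a, a < χ.len → ∀ k, k < n → (k < ix ∨ iy ≤ k) → χ.edg e a ≠ ω.edg e k := by
    intro a ha k hk hkr hc
    rcases endpoints_eq e ha hk hc with ⟨h1, h2⟩ | ⟨h1, h2⟩
    · have e1 := hχarc a (by omega) k (by omega) (by omega) h1.symm
      have e2 := hχarc (a+1) (by omega) (k+1) (by omega) (by omega) h2.symm
      rw [h1] at e1
      rw [h2] at e2
      rcases e1 with e1 | e1 <;> rcases e2 with e2 | e2
      · have := hxpos k (by omega) e1; have := hxpos (k+1) (by omega) e2; omega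
      · have := hxpos k (by omega) e1; have := hypos (k+1) (by omega) e2; omega
      · have := hypos k (by omega) e1; have := hxpos (k+1) (by omega) e2; omega
      · have := hypos k (by omega) e1; have := hypos (k+1) (by omega) e2; omega
    · have e1 := hχarc a (by omega) (k+1) (by omega) (by omega) h1.symm
      have e2 := hχarc (a+1) (by omega) k (by omega) (by omega) h2.symm
      rw [h1] at e1
      rw [h2] at e2
      rcases e1 with e1 | e1 <;> rcases e2 with e2 | e2
      · have := hxpos (k+1) (by omega) e1; have := hxpos k (by omega) e2; omega
      · have := hxpos (k+1) (by omega) e1; have := hypos k (by omega) e2; omega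
      · have := hypos (k+1) (by omega) e1; have := hxpos k (by omega) e2; omega
      · have := hypos (k+1) (by omega) e1; have := hypos k (by omega) e2; omega
  -- helper: κ on the arc leads to a contradiction with a start-color clash
  have hκcontra : ∀ k, k < n → (k < ix ∨ iy ≤ k) → (κ = ω.vtx k ∨ κ = ω.vtx (k+1)) →
      e = ω.edg e k → False := by
    intro k hk hkr hκpos hee
    have hκxy : κ = x ∨ κ = y := by
      rcases hκpos with h | h
      · have := hρarc ρ.len (le_refl _) k (by omega) (by omega) (by rw [← hρtgt] at h; exact h.symm)
        rw [hρtgt] at this; exact this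
      · have hr2 : k + 1 ≤ ix ∨ iy ≤ k + 1 := by omega
        have := hρarc ρ.len (le_refl _) (k+1) (by omega) hr2 (by rw [← hρtgt] at h; exact h.symm)
        rw [hρtgt] at this; exact this
    -- in every case we obtain a color contradiction
    rcases hκxy with hκ | hκ
    · -- κ = x, hence ρ.len = 0 and ρe's first edge is e
      have hρ0 := hκx hκ
      have hfirst : ρe.edg e 0 = e := by rw [show (0:ℕ) = ρ.len by omega]; exact hρelast'
      rw [hfirst] at hρe_start
      -- determine the position of κ = x
      rcases hκpos with h | h
      · have hkix := hxpos k (by omega) (by rw [← hκ]; exact h.symm)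
        -- k = ix, so from range, iy ≤ ix, i.e. ix = iy, and x = y
        have hxy : ix = iy := by omega
        have hκy' : κ = y := by rw [hκ, ← hx, ← hy, hxy]
        have hχ0 := hκy hκy'
        have hfirstχ : χe.edg e 0 = e := by rw [show (0:ℕ) = χ.len by omega]; exact hχelast'
        rw [hfirstχ] at hχe_start
        apply hχe_start
        have heq : e = ω.edg e iy := by rw [show iy = k by omega]; exact hee
        rw [← heq]
      · have hkix := hxpos (k+1) (by omega) (by rw [← hκ]; exact h.symm)
        apply hρe_start
        have heq : e = ω.edg e (ix - 1) := by rw [show ix - 1 = k by omega]; exact hee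
        rw [← heq]
    · -- κ = y, hence χ.len = 0 and χe's first edge is e
      have hχ0 := hκy hκ
      have hfirstχ : χe.edg e 0 = e := by rw [show (0:ℕ) = χ.len by omega]; exact hχelast'
      rw [hfirstχ] at hχe_start
      rcases hκpos with h | h
      · have hkiy := hypos k (by omega) (by rw [← hκ]; exact h.symm)
        apply hχe_start
        have heq : e = ω.edg e iy := by rw [show iy = k by omega]; exact hee
        rw [← heq]
      · have hkiy := hypos (k+1) (by omega) (by rw [← hκ]; exact h.symm)
        -- k = iy - 1; from range k < ix, so iy ≤ ix, ix = iy, x = y, κ = x, ρ.len = 0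
        have hxy : ix = iy := by omega
        have hκx' : κ = x := by rw [hκ, ← hx, ← hy, hxy]
        have hρ0 := hκx hκx'
        have hfirst : ρe.edg e 0 = e := by rw [show (0:ℕ) = ρ.len by omega]; exact hρelast'
        rw [hfirst] at hρe_start
        apply hρe_start
        have heq : e = ω.edg e (ix - 1) := by rw [show ix - 1 = k by omega]; exact hee
        rw [← heq]
  have Erω : ∀ b, b < i₁ → ∀ k, k < n → (k < ix ∨ iy ≤ k) → r.edg e b ≠ ω.edg e k := by
    intro b hb k hk hkr hc
    by_cases hb1 : 1 ≤ b
    · -- interior endpoint r.vtx b is not on the arc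
      rcases endpoints_eq e (show b < r.len by omega) hk hc with ⟨h1, h2⟩ | ⟨h1, h2⟩
      · exact hint b hb1 hb k (by omega) (by omega) h1.symm
      · exact hint b hb1 hb (k+1) (by omega) (by omega) h1.symm
    · -- b = 0; the edge is e with endpoints κ and l
      have hb0 : b = 0 := by omega
      subst hb0
      rw [hre0] at hc
      by_cases hi2 : 2 ≤ i₁
      · -- r.vtx 1 = l is not on the arc
        rcases endpoints_eq e (show (0:ℕ) < r.len by omega) hk (by rw [hre0]; exact hc) with ⟨h1, h2⟩ | ⟨h1, h2⟩
        · exact hint 1 (le_refl _) (by omega) (k+1) (by omega) (by omega) h2.symm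
        · exact hint 1 (le_refl _) (by omega) k (by omega) (by omega) h2.symm
      · -- i₁ = 1, so r.vtx 1 = l = ω.vtx m
        have hi1 : i₁ = 1 := by omega
        rcases endpoints_eq e (show (0:ℕ) < r.len by omega) hk (by rw [hre0]; exact hc) with ⟨h1, h2⟩ | ⟨h1, h2⟩
        · exact hκcontra k hk hkr (Or.inl (by rw [← hrsrc]; exact h1)) hc
        · exact hκcontra k hk hkr (Or.inr (by rw [← hrsrc]; exact h1)) hc
  have Eρr : ∀ a, a < ρ.len → ∀ b, b < i₁ → ρ.edg e a ≠ r.edg e b := by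
    intro a ha b hb hc
    by_cases hb1 : 1 ≤ b
    · rcases endpoints_eq e ha (show b < r.len by omega) hc with ⟨h1, h2⟩ | ⟨h1, h2⟩
      · exact hpρ b hb1 (by omega) a (by omega) h1
      · exact hpρ (b+1) (by omega) (by omega) a (by omega) h1
    · have hb0 : b = 0 := by omega
      subst hb0
      rw [hre0] at hc
      exact hρnote a ha hc
  have Eχr : ∀ a, a < χ.len → ∀ b, b < i₁ → χ.edg e a ≠ r.edg e b := by
    intro a ha b hb hc
    by_cases hb1 : 1 ≤ b
    · rcases endpoints_eq e ha (show b < r.len by omega) hc with ⟨h1, h2⟩ | ⟨h1, h2⟩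
      · exact hpχ b hb1 (by omega) a (by omega) h1
      · exact hpχ (b+1) (by omega) (by omega) a (by omega) h1
    · have hb0 : b = 0 := by omega
      subst hb0
      rw [hre0] at hc
      exact hχnote a ha hc
  
  obtain ⟨jc, hjc1, hjc2, hjcC⟩ := hjc
  have hjcn : jc < n := cuspIdx_lt hjcC
  -- the prefix r₁ of r and the segment of ω, shared by both constructions
  have hr₁vtx : ∀ i, i ≤ i₁ → (r.seg 0 i₁ (by omega) hi1r).vtx i = r.vtx i := by
    intro i hi
    rw [seg_vtx r 0 i₁ (by omega) hi1r (by omega), Nat.zero_add]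
  have hr₁edg : ∀ i, i < i₁ → (r.seg 0 i₁ (by omega) hi1r).edg e i = r.edg e i := by
    intro i hi
    rw [seg_edg r 0 i₁ (by omega) hi1r e (by omega), Nat.zero_add]
  have hr₁len : (r.seg 0 i₁ (by omega) hi1r).len = i₁ := rfl
  -- construction R1: the cusp-free cycle  χ ++ r₁ ++ rev (ω[iy..m])
  have R1 : c (r.edg e (i₁ - 1)) (r.vtx i₁) ≠ c (ω.edg e (m - 1)) (r.vtx i₁) →
      (∀ k, iy < k → k < m → ¬ ω.CuspIdx c k) →
      ∃ δ : G.Walk, δ.IsCycle ∧ δ.CuspFree c ∧ δ.MemE e := by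
    intro hfree hnoK
    have hj1 : χ.tgt = (r.seg 0 i₁ (by omega) hi1r).src := by
      rw [tgt_eq_vtx, src_eq_vtx, hr₁vtx 0 (by omega), hχtgt, hrsrc]
    have hj2 : (χ.app (r.seg 0 i₁ (by omega) hi1r) hj1).tgt = (rev (ω.seg iy m (by omega) hmn)).src := by
      rw [app_tgt, rev_src, seg_tgt, seg_tgt, hwm]
    set W1 : G.Walk := (χ.app (r.seg 0 i₁ (by omega) hi1r) hj1).app (rev (ω.seg iy m (by omega) hmn)) hj2 with hW1def
    have hL1 : W1.len = χ.len + i₁ + (m - iy) := by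
      rw [hW1def, app_len, app_len, rev_len, seg_len, seg_len]
      omega
    have hV1 : ∀ i, i ≤ χ.len → W1.vtx i = χ.vtx i := by
      intro i hi
      rw [hW1def, app_vtx_left _ _ _ (by rw [app_len, hr₁len]; omega),
        app_vtx_left _ _ _ (by omega)]
    have hV2 : ∀ i, χ.len ≤ i → i ≤ χ.len + i₁ → W1.vtx i = r.vtx (i - χ.len) := by
      intro i hi1 hi2
      rw [hW1def, app_vtx_left _ _ _ (by rw [app_len, hr₁len]; omega),
        app_vtx_right _ _ _ (by omega) (by rw [hr₁len]; omega), hr₁vtx _ (by omega)]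
    have hV3 : ∀ i, χ.len + i₁ ≤ i → i ≤ χ.len + i₁ + (m - iy) → W1.vtx i = ω.vtx (m - (i - χ.len - i₁)) := by
      intro i hi1 hi2
      rw [hW1def, app_vtx_right _ _ _ (by rw [app_len, hr₁len]; omega)
        (by rw [app_len, hr₁len, rev_len, seg_len]; omega)]
      rw [app_len, hr₁len]
      rw [rev_vtx _ (by rw [seg_len]; omega)]
      rw [seg_len]
      rw [seg_vtx ω iy m (by omega) hmn (by omega)]
      congr 1
      omega
    have hE1 : ∀ i, i < χ.len → W1.edg e i = χ.edg e i := by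
      intro i hi
      rw [hW1def, app_edg_left _ _ _ _ (by rw [app_len, hr₁len]; omega),
        app_edg_left _ _ _ _ (by omega)]
    have hE2 : ∀ i, χ.len ≤ i → i < χ.len + i₁ → W1.edg e i = r.edg e (i - χ.len) := by
      intro i hi1 hi2
      rw [hW1def, app_edg_left _ _ _ _ (by rw [app_len, hr₁len]; omega),
        app_edg_right _ _ _ _ (by omega) (by rw [hr₁len]; omega), hr₁edg _ (by omega)]
    have hE3 : ∀ i, χ.len + i₁ ≤ i → i < χ.len + i₁ + (m - iy) → W1.edg e i = ω.edg e (m - 1 - (i - χ.len - i₁)) := by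
      intro i hi1 hi2
      rw [hW1def, app_edg_right _ _ _ _ (by rw [app_len, hr₁len]; omega)
        (by rw [app_len, hr₁len, rev_len, seg_len]; omega)]
      rw [app_len, hr₁len]
      rw [rev_edg _ _ (by rw [seg_len]; omega)]
      rw [seg_len]
      rw [seg_edg ω iy m (by omega) hmn e (by omega)]
      congr 1
      omega
    have hcl1 : W1.vtx 0 = y := by rw [hV1 0 (by omega), hχsrc]
    have hcl2 : W1.vtx W1.len = y := by
      rw [hL1, hV3 _ (by omega) (by omega), show m - (χ.len + i₁ + (m - iy) - χ.len - i₁) = iy by omega, hy]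
    refine ⟨W1, ⟨?_, ?_, ?_⟩, ?_, ?_⟩
    · -- IsSimple
      rw [isSimple_iff _ e]
      constructor
      · -- edges
        intro i j hij hj hc
        rw [hL1] at hj
        by_cases hz1 : j < χ.len
        · rw [hE1 i (by omega), hE1 j hz1] at hc
          exact hχeinj i j hij hz1 hc
        · by_cases hz2 : j < χ.len + i₁
          · rw [hE2 j (by omega) hz2] at hc
            by_cases hi1' : i < χ.len
            · rw [hE1 i hi1'] at hc
              exact Eχr i hi1' (j - χ.len) (by omega) hc
            · rw [hE2 i (by omega) (by omega)] at hc
              exact hreinj (i - χ.len) (j - χ.len) (by omega) (by omega) hc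
          · rw [hE3 j (by omega) (by omega)] at hc
            have hkj : m - 1 - (j - χ.len - i₁) < n := by omega
            have hkjr : m - 1 - (j - χ.len - i₁) < ix ∨ iy ≤ m - 1 - (j - χ.len - i₁) := by omega
            by_cases hi1' : i < χ.len
            · rw [hE1 i hi1'] at hc
              exact Eχω i hi1' _ hkj hkjr hc
            · by_cases hi2' : i < χ.len + i₁
              · rw [hE2 i (by omega) hi2'] at hc
                exact Erω (i - χ.len) (by omega) _ hkj hkjr hc
              · rw [hE3 i (by omega) (by omega)] at hc
                have hlt : m - 1 - (j - χ.len - i₁) < m - 1 - (i - χ.len - i₁) := by omega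
                exact heinjω _ _ hlt (by omega) hc.symm
      · -- vertices
        intro i j hij hj hc
        rw [hL1] at hj
        by_cases hz1 : j ≤ χ.len
        · rw [hV1 i (by omega), hV1 j hz1] at hc
          exact absurd hc (hχvinj i j hij hz1)
        · by_cases hz2 : j ≤ χ.len + i₁
          · rw [hV2 j (by omega) hz2] at hc
            by_cases hi1' : i ≤ χ.len
            · rw [hV1 i hi1'] at hc
              exact absurd hc (hpχ (j - χ.len) (by omega) (by omega) i hi1')
            · rw [hV2 i (by omega) (by omega)] at hc
              exact absurd hc (hrvinj (i - χ.len) (j - χ.len) (by omega) (by omega))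
          · rw [hV3 j (by omega) (by omega)] at hc
            set kj := m - (j - χ.len - i₁) with hkjdef
            have hkj1 : iy ≤ kj := by omega
            have hkjn : kj ≤ n := by omega
            by_cases hi1' : i ≤ χ.len
            · rw [hV1 i hi1'] at hc
              have harc := hχarc i hi1' kj hkjn (by omega) hc.symm
              rcases harc with hxx | hyy
              · have hkx : kj = ix := hxpos kj hkjn (by rw [← hc]; exact hxx)
                have hxy : x = y := by rw [← hx, ← hy, show ix = iy by omega]
                have hi0 : i = 0 := by
                  by_contra hne0
                  exact hχvinj 0 i (by omega) (by omega) (by rw [hχsrc, hxx, hxy])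
                refine ⟨hi0, ?_⟩
                rw [hL1]
                omega
              · have hky : kj = iy := hypos kj hkjn (by rw [← hc]; exact hyy)
                have hi0 : i = 0 := by
                  by_contra hne0
                  exact hχvinj 0 i (by omega) (by omega) (by rw [hχsrc, hyy])
                refine ⟨hi0, ?_⟩
                rw [hL1]
                omega
            · by_cases hi2' : i ≤ χ.len + i₁
              · rw [hV2 i (by omega) hi2'] at hc
                rcases Nat.lt_or_ge (i - χ.len) i₁ with hbi | hbi
                · exact absurd hc.symm (hint (i - χ.len) (by omega) hbi kj hkjn (by omega))
                · have hbb : i - χ.len = i₁ := by omega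
                  rw [hbb, ← hwm] at hc
                  have := hvinj kj m (by omega) hmn hc.symm
                  omega
              · rw [hV3 i (by omega) (by omega)] at hc
                have hlt : m - (j - χ.len - i₁) < m - (i - χ.len - i₁) := by omega
                have := hvinj _ _ hlt (by omega) hc.symm
                omega
    · -- IsClosed
      rw [isClosed_iff, hcl1, hcl2]
    · rw [hL1]; omega
    · -- CuspFree
      intro j hcusp
      rw [cuspIdx_iff _ e] at hcusp
      rcases hcusp with ⟨hj0, hjL, hne, hcol⟩ | ⟨hj0, hcl, hL0, hne, hcol⟩
      · rw [hL1] at hjL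
        by_cases hz1 : j < χ.len
        · apply hχe_cf j
          rw [cuspIdx_iff _ e]
          left
          rw [hE1 (j-1) (by omega), hE1 j hz1] at hne
          rw [hE1 (j-1) (by omega), hE1 j hz1, hV1 j (by omega)] at hcol
          refine ⟨hj0, by omega, ?_, ?_⟩
          · rw [hχee' (j-1) (by omega), hχee' j (by omega)]; exact hne
          · rw [hχee' (j-1) (by omega), hχee' j (by omega), hχev' j (by omega)]; exact hcol
        · by_cases hz2 : j = χ.len
          · subst hz2
            apply hχe_cf χ.len
            rw [cuspIdx_iff _ e]
            left
            rw [hE1 (χ.len - 1) (by omega), hE2 χ.len (le_refl _) (by omega), Nat.sub_self, hre0] at hne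
            rw [hE1 (χ.len - 1) (by omega), hE2 χ.len (le_refl _) (by omega), Nat.sub_self, hre0,
              hV2 χ.len (le_refl _) (by omega), Nat.sub_self, hrsrc] at hcol
            refine ⟨by omega, by omega, ?_, ?_⟩
            · rw [hχee' (χ.len - 1) (by omega), hχelast']; exact hne
            · rw [hχee' (χ.len - 1) (by omega), hχelast', hχev' χ.len (le_refl _), hχtgt]; exact hcol
          · by_cases hz3 : j < χ.len + i₁
            · apply hrcf (j - χ.len)
              rw [cuspIdx_iff _ e]
              left
              rw [hE2 (j-1) (by omega) (by omega), hE2 j (by omega) hz3] at hne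
              rw [hE2 (j-1) (by omega) (by omega), hE2 j (by omega) hz3,
                hV2 j (by omega) (by omega)] at hcol
              rw [show j - 1 - χ.len = j - χ.len - 1 by omega] at hne hcol
              exact ⟨by omega, by omega, hne, hcol⟩
            · by_cases hz4 : j = χ.len + i₁
              · subst hz4
                rw [hE2 (χ.len + i₁ - 1) (by omega) (by omega), hE3 (χ.len + i₁) (le_refl _) (by omega),
                  hV3 (χ.len + i₁) (le_refl _) (by omega)] at hcol
                rw [show χ.len + i₁ - 1 - χ.len = i₁ - 1 by omega,
                  show m - 1 - (χ.len + i₁ - χ.len - i₁) = m - 1 by omega,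
                  show m - (χ.len + i₁ - χ.len - i₁) = m by omega, hwm] at hcol
                exact hfree hcol
              · have ht1 : χ.len + i₁ < j := by omega
                set k := m - (j - χ.len - i₁) with hkdef
                apply hnoK k (by omega) (by omega)
                rw [cuspIdx_iff _ e]
                left
                rw [hE3 (j-1) (by omega) (by omega), hE3 j (by omega) (by omega)] at hne
                rw [hE3 (j-1) (by omega) (by omega), hE3 j (by omega) (by omega),
                  hV3 j (by omega) (by omega)] at hcol
                rw [show m - 1 - (j - 1 - χ.len - i₁) = k by omega,
                  show m - 1 - (j - χ.len - i₁) = k - 1 by omega] at hne hcol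
                exact ⟨by omega, by omega, hne.symm, hcol.symm⟩
      · -- closed-case cusp at y : contradicts the start color of χe
        rw [hL1] at hL0
        apply hχe_start
        have hOne : W1.edg e (W1.len - 1) = ω.edg e iy := by
          rw [hL1, hE3 (χ.len + i₁ + (m - iy) - 1) (by omega) (by omega)]
          congr 1
          omega
        have hZero : W1.edg e 0 = χe.edg e 0 := by
          by_cases hs0 : χ.len = 0
          · have h1 : W1.edg e 0 = r.edg e 0 := by
              rw [hE2 0 (by omega) (by omega)]
              congr 1
              omega
            have h2 : χe.edg e 0 = e := by
              rw [show (0:ℕ) = χ.len by omega]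
              exact hχelast'
            rw [h1, hre0, h2]
          · rw [hE1 0 (by omega), hχee' 0 (by omega)]
        rw [hOne, hZero, hcl1] at hcol
        exact hcol.symm
    · -- MemE e
      rw [memE_iff _ e]
      refine ⟨χ.len, by rw [hL1]; omega, ?_⟩
      rw [hE2 χ.len (le_refl _) (by omega), Nat.sub_self, hre0]
  
  -- construction R2: the improved cycle  ω[0..ix] ++ ρ ++ r₁ ++ ω[m..n]
  have R2 : ∀ t, iy < t → t ≤ m →
      (m < n → c (r.edg e (i₁ - 1)) (r.vtx i₁) = c (ω.edg e m) (r.vtx i₁) → ω.CuspIdx c t) →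
      ∃ ω' : G.Walk, ω'.IsCycle ∧ ω'.src = v ∧ ¬ ω'.HasCuspAtV c v ∧
        ω'.cuspCount c < ω.cuspCount c := by
    intro t ht1 ht2 htc
    have hk1 : (ω.seg 0 ix (by omega) (by omega)).tgt = ρ.src := by
      rw [seg_tgt, src_eq_vtx, hx, hρsrc]
    have hk2 : ((ω.seg 0 ix (by omega) (by omega)).app ρ hk1).tgt = (r.seg 0 i₁ (by omega) hi1r).src := by
      rw [app_tgt, tgt_eq_vtx, src_eq_vtx, hρtgt, hr₁vtx 0 (by omega), hrsrc]
    have hk3 : (((ω.seg 0 ix (by omega) (by omega)).app ρ hk1).app (r.seg 0 i₁ (by omega) hi1r) hk2).tgt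
        = (ω.seg m n hmn (by omega)).src := by
      rw [app_tgt, seg_tgt, seg_src, hwm]
    set W2 : G.Walk := ((((ω.seg 0 ix (by omega) (by omega)).app ρ hk1).app
      (r.seg 0 i₁ (by omega) hi1r) hk2)).app (ω.seg m n hmn (by omega)) hk3 with hW2def
    have hsegl1 : (ω.seg 0 ix (by omega : (0:ℕ) ≤ ix) (by omega : ix ≤ ω.len)).len = ix := rfl
    have hL2 : W2.len = ix + ρ.len + i₁ + (n - m) := by
      rw [hW2def, app_len, app_len, app_len, hr₁len, seg_len, seg_len]
      omega
    have hU1 : ∀ i, i ≤ ix → W2.vtx i = ω.vtx i := by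
      intro i hi
      rw [hW2def, app_vtx_left _ _ _ (by rw [app_len, app_len, hr₁len, seg_len]; omega),
        app_vtx_left _ _ _ (by rw [app_len, seg_len]; omega),
        app_vtx_left _ _ _ (by rw [seg_len]; omega),
        seg_vtx ω 0 ix (by omega) (by omega) (by omega), Nat.zero_add]
    have hU2 : ∀ i, ix ≤ i → i ≤ ix + ρ.len → W2.vtx i = ρ.vtx (i - ix) := by
      intro i hi1 hi2
      rw [hW2def, app_vtx_left _ _ _ (by rw [app_len, app_len, hr₁len, seg_len]; omega),
        app_vtx_left _ _ _ (by rw [app_len, seg_len]; omega),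
        app_vtx_right _ _ _ (by rw [seg_len]; omega) (by rw [seg_len]; omega)]
      congr 1
    have hU3 : ∀ i, ix + ρ.len ≤ i → i ≤ ix + ρ.len + i₁ → W2.vtx i = r.vtx (i - ix - ρ.len) := by
      intro i hi1 hi2
      rw [hW2def, app_vtx_left _ _ _ (by rw [app_len, app_len, hr₁len, seg_len]; omega),
        app_vtx_right _ _ _ (by rw [app_len, seg_len]; omega) (by rw [app_len, hr₁len, seg_len]; omega)]
      have h9 : i - (((ω.seg 0 ix (by omega) (by omega)).app ρ hk1).len) = i - ix - ρ.len := by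
        rw [app_len, seg_len]; omega
      rw [h9, hr₁vtx _ (by omega)]
    have hU4 : ∀ i, ix + ρ.len + i₁ ≤ i → i ≤ ix + ρ.len + i₁ + (n - m) →
        W2.vtx i = ω.vtx (m + (i - ix - ρ.len - i₁)) := by
      intro i hi1 hi2
      rw [hW2def, app_vtx_right _ _ _ (by rw [app_len, app_len, hr₁len, seg_len]; omega)
        (by rw [app_len, app_len, hr₁len, seg_len, seg_len]; omega),
        app_len, app_len, hr₁len, seg_len,
        seg_vtx ω m n hmn (by omega) (by omega)]
      congr 1
      omega
    have hF1 : ∀ i, i < ix → W2.edg e i = ω.edg e i := by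
      intro i hi
      rw [hW2def, app_edg_left _ _ _ _ (by rw [app_len, app_len, hr₁len, seg_len]; omega),
        app_edg_left _ _ _ _ (by rw [app_len, seg_len]; omega),
        app_edg_left _ _ _ _ (by rw [seg_len]; omega),
        seg_edg ω 0 ix (by omega) (by omega) e (by omega), Nat.zero_add]
    have hF2 : ∀ i, ix ≤ i → i < ix + ρ.len → W2.edg e i = ρ.edg e (i - ix) := by
      intro i hi1 hi2
      rw [hW2def, app_edg_left _ _ _ _ (by rw [app_len, app_len, hr₁len, seg_len]; omega),
        app_edg_left _ _ _ _ (by rw [app_len, seg_len]; omega),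
        app_edg_right _ _ _ _ (by rw [seg_len]; omega) (by rw [seg_len]; omega)]
      congr 1
    have hF3 : ∀ i, ix + ρ.len ≤ i → i < ix + ρ.len + i₁ → W2.edg e i = r.edg e (i - ix - ρ.len) := by
      intro i hi1 hi2
      rw [hW2def, app_edg_left _ _ _ _ (by rw [app_len, app_len, hr₁len, seg_len]; omega),
        app_edg_right _ _ _ _ (by rw [app_len, seg_len]; omega) (by rw [app_len, hr₁len, seg_len]; omega)]
      have h9 : i - (((ω.seg 0 ix (by omega) (by omega)).app ρ hk1).len) = i - ix - ρ.len := by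
        rw [app_len, seg_len]; omega
      rw [h9, hr₁edg _ (by omega)]
    have hF4 : ∀ i, ix + ρ.len + i₁ ≤ i → i < ix + ρ.len + i₁ + (n - m) →
        W2.edg e i = ω.edg e (m + (i - ix - ρ.len - i₁)) := by
      intro i hi1 hi2
      rw [hW2def, app_edg_right _ _ _ _ (by rw [app_len, app_len, hr₁len, seg_len]; omega)
        (by rw [app_len, app_len, hr₁len, seg_len, seg_len]; omega),
        app_len, app_len, hr₁len, seg_len,
        seg_edg ω m n hmn (by omega) e (by omega)]
      congr 1
      omega
    -- the first "ρe"-edge of W2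
    have hFix : W2.edg e ix = ρe.edg e 0 := by
      by_cases hρ0 : ρ.len = 0
      · rw [hF3 ix (by omega) (by omega), show ix - ix - ρ.len = 0 by omega, hre0,
          show (0:ℕ) = ρ.len from hρ0.symm]
        exact hρelast'.symm
      · rw [hF2 ix (le_refl _) (by omega), Nat.sub_self, hρee' 0 (by omega)]
    have hcl1 : W2.vtx 0 = v := by rw [hU1 0 (by omega), hsrc]
    have hcl2 : W2.vtx W2.len = v := by
      rw [hL2, hU4 _ (by omega) (by omega),
        show m + (ix + ρ.len + i₁ + (n - m) - ix - ρ.len - i₁) = n by omega, ← hclosed, hsrc]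
    -- classification of the cusps of W2
    have hclass : ∀ j, W2.CuspIdx c j →
        (0 < j ∧ j < ix ∧ ω.CuspIdx c j) ∨
        (j = ix + ρ.len + i₁ ∧ m < n ∧
          c (r.edg e (i₁ - 1)) (r.vtx i₁) = c (ω.edg e m) (r.vtx i₁)) ∨
        (ix + ρ.len + i₁ < j ∧ j < W2.len ∧ ω.CuspIdx c (m + (j - ix - ρ.len - i₁))) := by
      intro j hcusp
      rw [cuspIdx_iff _ e] at hcusp
      rcases hcusp with ⟨hj0, hjL, hne, hcol⟩ | ⟨hj0, hcl, hL0, hne, hcol⟩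
      · rw [hL2] at hjL
        by_cases hz1 : j < ix
        · left
          refine ⟨hj0, hz1, ?_⟩
          rw [cuspIdx_iff _ e]
          left
          rw [hF1 (j-1) (by omega), hF1 j hz1] at hne
          rw [hF1 (j-1) (by omega), hF1 j hz1, hU1 j (by omega)] at hcol
          exact ⟨hj0, by omega, hne, hcol⟩
        · by_cases hz2 : j = ix
          · -- junction at x : impossible by the start-color of ρe
            exfalso
            rw [hz2] at hcol
            rw [hF1 (ix-1) (by omega), hFix, hU1 ix (le_refl _), hx] at hcol
            exact hρe_start hcol.symm
          · by_cases hz3 : j < ix + ρ.len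
            · -- cusp inside ρ
              exfalso
              apply hρe_cf (j - ix)
              rw [cuspIdx_iff _ e]
              left
              rw [hF2 (j-1) (by omega) (by omega), hF2 j (by omega) hz3] at hne
              rw [hF2 (j-1) (by omega) (by omega), hF2 j (by omega) hz3,
                hU2 j (by omega) (by omega)] at hcol
              rw [show j - 1 - ix = j - ix - 1 by omega] at hne hcol
              refine ⟨by omega, by omega, ?_, ?_⟩
              · rw [hρee' (j - ix - 1) (by omega), hρee' (j - ix) (by omega)]; exact hne
              · rw [hρee' (j - ix - 1) (by omega), hρee' (j - ix) (by omega),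
                  hρev' (j - ix) (by omega)]; exact hcol
            · by_cases hz4 : j = ix + ρ.len
              · -- junction at κ
                exfalso
                have hρpos : 0 < ρ.len := by omega
                subst hz4
                apply hρe_cf ρ.len
                rw [cuspIdx_iff _ e]
                left
                rw [hF2 (ix + ρ.len - 1) (by omega) (by omega),
                  hF3 (ix + ρ.len) (le_refl _) (by omega),
                  show ix + ρ.len - ix - ρ.len = 0 by omega, hre0,
                  show ix + ρ.len - 1 - ix = ρ.len - 1 by omega] at hne
                rw [hF2 (ix + ρ.len - 1) (by omega) (by omega),
                  hF3 (ix + ρ.len) (le_refl _) (by omega),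
                  hU3 (ix + ρ.len) (le_refl _) (by omega),
                  show ix + ρ.len - ix - ρ.len = 0 by omega, hre0, hrsrc,
                  show ix + ρ.len - 1 - ix = ρ.len - 1 by omega] at hcol
                refine ⟨by omega, by omega, ?_, ?_⟩
                · rw [hρee' (ρ.len - 1) (by omega), hρelast']; exact hne
                · rw [hρee' (ρ.len - 1) (by omega), hρelast', hρev' ρ.len (le_refl _), hρtgt]
                  exact hcol
              · by_cases hz5 : j < ix + ρ.len + i₁
                · -- cusp inside r
                  exfalso
                  apply hrcf (j - ix - ρ.len)
                  rw [cuspIdx_iff _ e]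
                  left
                  rw [hF3 (j-1) (by omega) (by omega), hF3 j (by omega) hz5] at hne
                  rw [hF3 (j-1) (by omega) (by omega), hF3 j (by omega) hz5,
                    hU3 j (by omega) (by omega)] at hcol
                  rw [show j - 1 - ix - ρ.len = j - ix - ρ.len - 1 by omega] at hne hcol
                  exact ⟨by omega, by omega, hne, hcol⟩
                · by_cases hz6 : j = ix + ρ.len + i₁
                  · -- junction at w
                    right; left
                    subst hz6
                    rw [hF3 (ix + ρ.len + i₁ - 1) (by omega) (by omega),
                      hF4 (ix + ρ.len + i₁) (le_refl _) (by omega),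
                      hU3 (ix + ρ.len + i₁) (by omega) (by omega)] at hcol
                    rw [show ix + ρ.len + i₁ - 1 - ix - ρ.len = i₁ - 1 by omega,
                      show m + (ix + ρ.len + i₁ - ix - ρ.len - i₁) = m by omega,
                      show ix + ρ.len + i₁ - ix - ρ.len = i₁ by omega] at hcol
                    exact ⟨rfl, by omega, hcol⟩
                  · -- cusp inside ω[m..n]
                    right; right
                    have hjgt : ix + ρ.len + i₁ < j := by omega
                    refine ⟨hjgt, by rw [hL2]; omega, ?_⟩
                    rw [cuspIdx_iff _ e]
                    left
                    rw [hF4 (j-1) (by omega) (by omega), hF4 j (by omega) (by omega)] at hne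
                    rw [hF4 (j-1) (by omega) (by omega), hF4 j (by omega) (by omega),
                      hU4 j (by omega) (by omega)] at hcol
                    rw [show m + (j - 1 - ix - ρ.len - i₁) = m + (j - ix - ρ.len - i₁) - 1 by omega]
                      at hne hcol
                    exact ⟨by omega, by omega, hne, hcol⟩
      · -- a cusp at the base point v is impossible
        exfalso
        rw [hL2] at hL0
        have hE0 : W2.edg e 0 = ω.edg e 0 := hF1 0 (by omega)
        by_cases hmlt : m < n
        · -- last edge of W2 is ω's last edge : would give a cusp of ω at 0
          have hElast : W2.edg e (W2.len - 1) = ω.edg e (n - 1) := by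
            rw [hL2, hF4 (ix + ρ.len + i₁ + (n - m) - 1) (by omega) (by omega)]
            congr 1
            omega
          apply hnocusp0
          rw [cuspIdx_iff _ e]
          right
          rw [hElast, hE0] at hne
          rw [hElast, hE0, hcl1] at hcol
          refine ⟨rfl, hclosed, by omega, hne, ?_⟩
          rw [hsrc]
          exact hcol
        · -- m = n : contradicts hlast
          have hmeq : m = n := by omega
          have hElast : W2.edg e (W2.len - 1) = r.edg e (i₁ - 1) := by
            rw [hL2, hF3 (ix + ρ.len + i₁ + (n - m) - 1) (by omega) (by omega)]
            congr 1
            omega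
          apply hlast hmeq
          rw [hElast, hE0, hcl1] at hcol
          rw [show r.vtx i₁ = v by rw [← hwm, hmeq, ← hclosed, hsrc]]
          exact hcol
    refine ⟨W2, ⟨?_, ?_, ?_⟩, ?_, ?_, ?_⟩
    · -- IsSimple
      rw [isSimple_iff _ e]
      constructor
      · -- edges
        intro i j hij hj hc
        rw [hL2] at hj
        by_cases hz1 : j < ix
        · rw [hF1 i (by omega), hF1 j hz1] at hc
          exact heinjω i j hij (by omega) hc
        · by_cases hz2 : j < ix + ρ.len
          · rw [hF2 j (by omega) hz2] at hc
            by_cases hi1' : i < ix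
            · rw [hF1 i hi1'] at hc
              exact Eρω (j - ix) (by omega) i (by omega) (by omega) hc.symm
            · rw [hF2 i (by omega) (by omega)] at hc
              exact hρeinj (i - ix) (j - ix) (by omega) (by omega) hc
          · by_cases hz3 : j < ix + ρ.len + i₁
            · rw [hF3 j (by omega) hz3] at hc
              by_cases hi1' : i < ix
              · rw [hF1 i hi1'] at hc
                exact Erω (j - ix - ρ.len) (by omega) i (by omega) (by omega) hc.symm
              · by_cases hi2' : i < ix + ρ.len
                · rw [hF2 i (by omega) hi2'] at hc
                  exact Eρr (i - ix) (by omega) (j - ix - ρ.len) (by omega) hc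
                · rw [hF3 i (by omega) (by omega)] at hc
                  exact hreinj (i - ix - ρ.len) (j - ix - ρ.len) (by omega) (by omega) hc
            · rw [hF4 j (by omega) (by omega)] at hc
              have hk : m + (j - ix - ρ.len - i₁) < n := by omega
              have hkr : m + (j - ix - ρ.len - i₁) < ix ∨ iy ≤ m + (j - ix - ρ.len - i₁) := by omega
              by_cases hi1' : i < ix
              · rw [hF1 i hi1'] at hc
                exact heinjω i _ (by omega) hk hc
              · by_cases hi2' : i < ix + ρ.len
                · rw [hF2 i (by omega) hi2'] at hc
                  exact Eρω (i - ix) (by omega) _ hk hkr hc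
                · by_cases hi3' : i < ix + ρ.len + i₁
                  · rw [hF3 i (by omega) hi3'] at hc
                    exact Erω (i - ix - ρ.len) (by omega) _ hk hkr hc
                  · rw [hF4 i (by omega) (by omega)] at hc
                    have hlt : m + (i - ix - ρ.len - i₁) < m + (j - ix - ρ.len - i₁) := by omega
                    exact heinjω _ _ hlt hk hc
      · -- vertices
        intro i j hij hj hc
        rw [hL2] at hj
        by_cases hz1 : j ≤ ix
        · rw [hU1 i (by omega), hU1 j hz1] at hc
          have := hvinj i j hij (by omega) hc
          omega
        · by_cases hz2 : j ≤ ix + ρ.len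
          · rw [hU2 j (by omega) hz2] at hc
            exfalso
            by_cases hi1' : i ≤ ix
            · rw [hU1 i hi1'] at hc
              have harc := hρarc (j - ix) (by omega) i (by omega) (by omega) hc
              have hρ0 : ρ.vtx (j - ix) = ρ.vtx 0 := by
                rcases harc with hxx | hyy
                · rw [hxx, hρsrc]
                · have hiiy : i = iy := hypos i (by omega) (by rw [hc, hyy])
                  have hixiy : ix = iy := by omega
                  rw [hyy, hρsrc, ← hx, ← hy, hixiy]
              exact hρvinj 0 (j - ix) (by omega) (by omega) hρ0.symm
            · rw [hU2 i (by omega) (by omega)] at hc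
              exact hρvinj (i - ix) (j - ix) (by omega) (by omega) hc
          · by_cases hz3 : j ≤ ix + ρ.len + i₁
            · rw [hU3 j (by omega) hz3] at hc
              by_cases hi1' : i ≤ ix
              · rw [hU1 i hi1'] at hc
                rcases Nat.lt_or_ge (j - ix - ρ.len) i₁ with hbj | hbj
                · exact absurd hc (hint (j - ix - ρ.len) (by omega) hbj i (by omega) (by omega))
                · have hbb : j - ix - ρ.len = i₁ := by omega
                  rw [hbb, ← hwm] at hc
                  have := hvinj i m (by omega) hmn hc
                  refine ⟨this.1, ?_⟩
                  rw [hL2]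
                  omega
              · exfalso
                by_cases hi2' : i ≤ ix + ρ.len
                · rw [hU2 i (by omega) hi2'] at hc
                  exact hpρ (j - ix - ρ.len) (by omega) (by omega) (i - ix) (by omega) hc
                · rw [hU3 i (by omega) (by omega)] at hc
                  exact hrvinj (i - ix - ρ.len) (j - ix - ρ.len) (by omega) (by omega) hc
            · rw [hU4 j (by omega) (by omega)] at hc
              set kj := m + (j - ix - ρ.len - i₁) with hkjdef
              have hkjn : kj ≤ n := by omega
              by_cases hi1' : i ≤ ix
              · rw [hU1 i hi1'] at hc
                have := hvinj i kj (by omega) hkjn hc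
                refine ⟨this.1, ?_⟩
                rw [hL2]
                omega
              · exfalso
                by_cases hi2' : i ≤ ix + ρ.len
                · rw [hU2 i (by omega) hi2'] at hc
                  have harc := hρarc (i - ix) (by omega) kj hkjn (by omega) hc.symm
                  rcases harc with hxx | hyy
                  · have := hxpos kj hkjn (by rw [← hc]; exact hxx)
                    omega
                  · have := hypos kj hkjn (by rw [← hc]; exact hyy)
                    omega
                · by_cases hi3' : i ≤ ix + ρ.len + i₁
                  · rw [hU3 i (by omega) (by omega)] at hc
                    rcases Nat.lt_or_ge (i - ix - ρ.len) i₁ with hbi | hbi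
                    · exact absurd hc.symm (hint (i - ix - ρ.len) (by omega) hbi kj hkjn (by omega))
                    · have hbb : i - ix - ρ.len = i₁ := by omega
                      rw [hbb, ← hwm] at hc
                      have := hvinj m kj (by omega) hkjn hc
                      omega
                  · rw [hU4 i (by omega) (by omega)] at hc
                    have hlt : m + (i - ix - ρ.len - i₁) < kj := by omega
                    have := hvinj _ _ hlt hkjn hc
                    omega
    · rw [isClosed_iff, hcl1, hcl2]
    · rw [hL2]; omega
    · rw [src_eq_vtx, hcl1]
    · -- no cusp at v
      intro hCv
      obtain ⟨j, hcusp, hvtx⟩ := (hasCuspAtV_iff W2 v).mp hCv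
      rcases hclass j hcusp with ⟨hj0, hjix, _⟩ | ⟨hjw, hmlt, _⟩ | ⟨hjgt, hjL, _⟩
      · rw [hU1 j (by omega)] at hvtx
        have := hvpos j (by omega) hvtx
        omega
      · subst hjw
        rw [hU3 _ (by omega) (by omega), show ix + ρ.len + i₁ - ix - ρ.len = i₁ by omega, ← hwm] at hvtx
        have := hvpos m (by omega) hvtx
        omega
      · rw [hL2] at hjL
        rw [hU4 j (by omega) (by omega)] at hvtx
        have := hvpos _ (by omega) hvtx
        omega
    · -- strictly fewer cusps
      set f : ℕ → ℕ := fun j => if j < ix then j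
        else if j = ix + ρ.len + i₁ then t else m + (j - ix - ρ.len - i₁) with hfdef
      have hfval : ∀ j, f j = if j < ix then j
          else if j = ix + ρ.len + i₁ then t else m + (j - ix - ρ.len - i₁) := fun j => rfl
      apply ncard_lt_of_inj _ _ (cuspSet_finite _ c) (cuspSet_finite _ c) f ?_ ?_ jc hjcC ?_
      · -- injectivity
        intro a ha b hb hab
        simp only [Set.mem_setOf_eq] at ha hb
        rw [hfval a, hfval b] at hab
        rcases hclass a ha with ⟨ha0, haix, _⟩ | ⟨haw, hamlt, _⟩ | ⟨hagt, haL, _⟩ <;>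
          rcases hclass b hb with ⟨hb0, hbix, _⟩ | ⟨hbw, hbmlt, _⟩ | ⟨hbgt, hbL, _⟩
        · rw [if_pos haix, if_pos hbix] at hab; exact hab
        · rw [if_pos haix, if_neg (show ¬ b < ix by omega), if_pos hbw] at hab; omega
        · rw [hL2] at hbL
          rw [if_pos haix, if_neg (show ¬ b < ix by omega),
            if_neg (show ¬ b = ix + ρ.len + i₁ by omega)] at hab
          omega
        · rw [if_neg (show ¬ a < ix by omega), if_pos haw, if_pos hbix] at hab; omega
        · omega
        · rw [hL2] at hbL
          rw [if_neg (show ¬ a < ix by omega), if_pos haw,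
            if_neg (show ¬ b < ix by omega), if_neg (show ¬ b = ix + ρ.len + i₁ by omega)] at hab
          omega
        · rw [hL2] at haL
          rw [if_neg (show ¬ a < ix by omega), if_neg (show ¬ a = ix + ρ.len + i₁ by omega),
            if_pos hbix] at hab
          omega
        · rw [hL2] at haL
          rw [if_neg (show ¬ a < ix by omega), if_neg (show ¬ a = ix + ρ.len + i₁ by omega),
            if_neg (show ¬ b < ix by omega), if_pos hbw] at hab
          omega
        · rw [hL2] at haL hbL
          rw [if_neg (show ¬ a < ix by omega), if_neg (show ¬ a = ix + ρ.len + i₁ by omega),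
            if_neg (show ¬ b < ix by omega), if_neg (show ¬ b = ix + ρ.len + i₁ by omega)] at hab
          omega
      · -- maps into the cusps of ω
        intro j hj
        simp only [Set.mem_setOf_eq] at hj ⊢
        rw [hfval j]
        rcases hclass j hj with ⟨hj0, hjix, hcj⟩ | ⟨hjw, hmlt, hcj⟩ | ⟨hjgt, hjL, hcj⟩
        · rw [if_pos hjix]
          exact hcj
        · rw [if_neg (show ¬ j < ix by omega), if_pos hjw]
          exact htc hmlt hcj
        · rw [if_neg (show ¬ j < ix by omega), if_neg (show ¬ j = ix + ρ.len + i₁ by omega)]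
          exact hcj
      · -- jc is not in the image
        intro j hj
        simp only [Set.mem_setOf_eq] at hj
        rw [hfval j]
        rcases hclass j hj with ⟨hj0, hjix, _⟩ | ⟨hjw, hmlt, _⟩ | ⟨hjgt, hjL, _⟩
        · rw [if_pos hjix]; omega
        · rw [if_neg (show ¬ j < ix by omega), if_pos hjw]; omega
        · rw [hL2] at hjL
          rw [if_neg (show ¬ j < ix by omega), if_neg (show ¬ j = ix + ρ.len + i₁ by omega)]
          omega
  -- final case analysis
  by_cases hA2 : m < n ∧ c (r.edg e (i₁ - 1)) (r.vtx i₁) = c (ω.edg e m) (r.vtx i₁)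
  · by_cases hA1 : c (r.edg e (i₁ - 1)) (r.vtx i₁) = c (ω.edg e (m - 1)) (r.vtx i₁)
    · -- ω has a cusp at m
      right
      apply R2 m hmgt (le_refl _)
      intro hmlt _
      rw [cuspIdx_iff _ e]
      left
      refine ⟨by omega, hmlt, heinjω (m-1) m (by omega) hmlt, ?_⟩
      rw [hwm]
      rw [← hA1, hA2.2]
    · by_cases hK : ∃ k, iy < k ∧ k < m ∧ ω.CuspIdx c k
      · obtain ⟨k, hk1, hk2, hkC⟩ := hK
        right
        exact R2 k hk1 (by omega) (fun _ _ => hkC)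
      · left
        exact R1 hA1 (fun k h1 h2 hC => hK ⟨k, h1, h2, hC⟩)
  · right
    apply R2 m hmgt (le_refl _)
    intro hmlt hcol
    exact absurd ⟨hmlt, hcol⟩ hA2

end Multigraph

open Multigraph.Walk

set_option maxHeartbeats 1000000 in
open Multigraph in
/-- **Cusp Minimization 2.** -/
theorem cusp_minimization_two
    {V E C : Type} [Fintype V] [Fintype E] [Fintype C]
    (G : Multigraph V E) (c : E → V → C)
    (ω : G.Walk) (v x y κ l : V) (e : E)
    (ix iy : ℕ) (hix0 : 0 < ix) (hixy : ix ≤ iy) (hiy : iy < ω.len)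
    (hcyc : ω.IsCycle) (hsrc : ω.src = v)
    (hnocusp : ¬ ω.HasCuspAtV c v)
    (hx : ω.vert ⟨ix, by omega⟩ = x) (hy : ω.vert ⟨iy, by omega⟩ = y)
    (hxv : x ≠ v) (hyv : y ≠ v)
    (hcuspxy : ∃ j : ℕ, ix ≤ j ∧ j ≤ iy ∧ ω.CuspIdx c j)
    (hκl : κ ≠ l) (hends : ∀ w : V, G.inc e w ↔ w = κ ∨ w = l)
    (ρ χ ρe χe p r : G.Walk)
    (hρsrc : ρ.src = x) (hρtgt : ρ.tgt = κ)
    (hχsrc : χ.src = y) (hχtgt : χ.tgt = κ)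
    (hρe : Walk.ExtendsBy ρe ρ e l)
    (hρe_simple : ρe.IsSimple) (hρe_cf : ρe.CuspFree c)
    (hρe_start : ρe.StartColorNe c (c (ω.edge ⟨ix - 1, by omega⟩) x))
    (hχe : Walk.ExtendsBy χe χ e l)
    (hχe_simple : χe.IsSimple) (hχe_cf : χe.CuspFree c)
    (hχe_start : χe.StartColorNe c (c (ω.edge ⟨iy, hiy⟩) y))
    (hdisjρχ : ∀ w : V, (ρ.MemV w ∨ χ.MemV w) →
      (∃ (j : ℕ) (hj : j < ω.len + 1), (j ≤ ix ∨ iy ≤ j) ∧ ω.vert ⟨j, hj⟩ = w) →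
      w = x ∨ w = y)
    (hr : Walk.ConsOf r e p) (hrsrc : r.src = κ)
    (hrsimple : r.IsSimple) (hropen : r.IsOpen) (hrcf : r.CuspFree c)
    (hu : ∃ (j : ℕ) (hj : j < ω.len + 1), (j ≤ ix ∨ iy ≤ j) ∧ ω.vert ⟨j, hj⟩ = r.tgt)
    (hdisjp : ∀ w : V, p.MemV w → ¬ ρ.MemV w ∧ ¬ χ.MemV w) :
    (∃ δ : G.Walk, δ.IsCycle ∧ δ.CuspFree c ∧ δ.MemE e) ∨
    (∃ ω' : G.Walk, ω'.IsCycle ∧ ω'.src = v ∧ ¬ ω'.HasCuspAtV c v ∧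
        ω'.cuspCount c < ω.cuspCount c) := by
  classical
  obtain ⟨hsimp, hclosed, hlen0⟩ := hcyc
  obtain ⟨hplen, hre0', hrv, hre⟩ := hr
  have hn2 : 2 ≤ ω.len := by omega
  have hclosedv : ω.vtx 0 = ω.vtx ω.len := (isClosed_iff ω).mp hclosed
  have hsrcv : ω.vtx 0 = v := by rw [← src_eq_vtx]; exact hsrc
  have hxv' : ω.vtx ix = x := by rw [vtx_eq _ (by omega)]; exact hx
  have hyv' : ω.vtx iy = y := by rw [vtx_eq _ (by omega)]; exact hy
  have hρsrc' : ρ.vtx 0 = x := by rw [← src_eq_vtx]; exact hρsrc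
  have hρtgt' : ρ.vtx ρ.len = κ := by rw [← tgt_eq_vtx]; exact hρtgt
  have hχsrc' : χ.vtx 0 = y := by rw [← src_eq_vtx]; exact hχsrc
  have hχtgt' : χ.vtx χ.len = κ := by rw [← tgt_eq_vtx]; exact hχtgt
  have hrsrcv : r.vtx 0 = κ := by rw [← src_eq_vtx]; exact hrsrc
  have hrlen : 1 ≤ r.len := by omega
  have hre0 : r.edg e 0 = e := by rw [edg_eq _ e (by omega)]; exact hre0'
  have heinjω : ∀ i j, i < j → j < ω.len → ω.edg e i ≠ ω.edg e j :=
    ((isSimple_iff ω e).mp hsimp).1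
  -- first edges of ρe, χe
  have hρelen : ρe.len = ρ.len + 1 := hρe.1
  have hχelen : χe.len = χ.len + 1 := hχe.1
  have hρesrc : ρe.vtx 0 = x := by
    obtain ⟨hl, hv, _⟩ := hρe
    rw [vtx_eq _ (by omega)]
    rw [hv 0 (by omega)]
    exact hρsrc'.symm ▸ (by rw [← vtx_eq _ (by omega)] : ρ.vert ⟨0, by omega⟩ = ρ.vtx 0) ▸ rfl
  have hρe_start' : c (ρe.edg e 0) x ≠ c (ω.edg e (ix - 1)) x := by
    have h0 : 0 < ρe.len := by omega
    have := hρe_start h0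
    rw [edge_eq_edg ρe e ⟨0, h0⟩] at this
    rw [edge_eq_edg ω e ⟨ix - 1, by omega⟩] at this
    have hsrceq : ρe.src = x := by rw [src_eq_vtx]; exact hρesrc
    rw [hsrceq] at this
    exact this
  have hχesrc : χe.vtx 0 = y := by
    obtain ⟨hl, hv, _⟩ := hχe
    rw [vtx_eq _ (by omega)]
    rw [hv 0 (by omega)]
    rw [← vtx_eq _ (by omega)]
    exact hχsrc'
  have hχe_start' : c (χe.edg e 0) y ≠ c (ω.edg e iy) y := by
    have h0 : 0 < χe.len := by omega
    have := hχe_start h0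
    rw [edge_eq_edg χe e ⟨0, h0⟩] at this
    rw [edge_eq_edg ω e ⟨iy, hiy⟩] at this
    have hsrceq : χe.src = y := by rw [src_eq_vtx]; exact hχesrc
    rw [hsrceq] at this
    exact this
  -- l is the second vertex of r
  have hrl : r.vtx 1 = l := by
    have hinc : G.inc e (r.vtx 1) := by
      have := (r.incs' e (show 0 < r.len by omega) (r.vtx 1)).mpr (Or.inr rfl)
      rwa [hre0] at this
    rcases (hends _).mp hinc with h | h
    · exact absurd (show r.vtx 0 = r.vtx 1 by rw [hrsrcv, ← h]) (adj_ne r (by omega))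
    · exact h
  -- the tail of r lies in p, hence is disjoint from ρ and χ
  have htail : ∀ i, 1 ≤ i → i ≤ r.len → p.MemV (r.vtx i) := by
    intro i h1 h2
    rw [memV_iff]
    refine ⟨i - 1, by omega, ?_⟩
    have := hrv (i-1) (by omega)
    rw [vert_eq_vtx, vert_eq_vtx] at this
    simp only at this
    rw [show i - 1 + 1 = i by omega] at this
    exact this.symm
  have hpρ' : ∀ i, 1 ≤ i → i ≤ r.len → ∀ a, a ≤ ρ.len → ρ.vtx a ≠ r.vtx i := by
    intro i h1 h2 a ha hcon
    exact (hdisjp _ (htail i h1 h2)).1 (by rw [memV_iff]; exact ⟨a, ha, hcon⟩)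
  have hpχ' : ∀ i, 1 ≤ i → i ≤ r.len → ∀ a, a ≤ χ.len → χ.vtx a ≠ r.vtx i := by
    intro i h1 h2 a ha hcon
    exact (hdisjp _ (htail i h1 h2)).2 (by rw [memV_iff]; exact ⟨a, ha, hcon⟩)
  have hρarc' : ∀ a, a ≤ ρ.len → ∀ j, j ≤ ω.len → (j ≤ ix ∨ iy ≤ j) → ω.vtx j = ρ.vtx a →
      ρ.vtx a = x ∨ ρ.vtx a = y := by
    intro a ha j hj harcj hc
    apply hdisjρχ (ρ.vtx a) (Or.inl (by rw [memV_iff]; exact ⟨a, ha, rfl⟩))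
    refine ⟨j, by omega, harcj, ?_⟩
    rw [← vtx_eq _ hj]
    exact hc
  have hχarc' : ∀ a, a ≤ χ.len → ∀ j, j ≤ ω.len → (j ≤ ix ∨ iy ≤ j) → ω.vtx j = χ.vtx a →
      χ.vtx a = x ∨ χ.vtx a = y := by
    intro a ha j hj harcj hc
    apply hdisjρχ (χ.vtx a) (Or.inr (by rw [memV_iff]; exact ⟨a, ha, rfl⟩))
    refine ⟨j, by omega, harcj, ?_⟩
    rw [← vtx_eq _ hj]
    exact hc
  -- the first index of r lying on the two arcs
  have hex : ∃ i, 1 ≤ i ∧ i ≤ r.len ∧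
      ∃ j, j ≤ ω.len ∧ (j ≤ ix ∨ iy ≤ j) ∧ ω.vtx j = r.vtx i := by
    obtain ⟨j₀, hj₀, hj₀arc, hj₀v⟩ := hu
    refine ⟨r.len, hrlen, le_refl _, j₀, by omega, hj₀arc, ?_⟩
    rw [vtx_eq _ (by omega), ← tgt_eq_vtx]
    exact hj₀v
  set i₁ := Nat.find hex with hi₁def
  obtain ⟨h1i, hi1r, m, hmω, hmarc, hwm⟩ := Nat.find_spec hex
  have hint' : ∀ i, 1 ≤ i → i < i₁ → ∀ j, j ≤ ω.len → (j ≤ ix ∨ iy ≤ j) →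
      ω.vtx j ≠ r.vtx i := by
    intro i h1 hlt j hj harcj hcon
    exact Nat.find_min hex hlt ⟨h1, by omega, j, hj, harcj, hcon⟩
  -- the original-orientation invocation of the auxiliary lemma
  have ORIG : ∀ m', iy ≤ m' → m' ≤ ω.len → ω.vtx m' = r.vtx i₁ →
      (m' = ω.len → c (r.edg e (i₁ - 1)) (r.vtx i₁) ≠ c (ω.edg e 0) v) →
      (∃ δ : G.Walk, δ.IsCycle ∧ δ.CuspFree c ∧ δ.MemE e) ∨
      (∃ ω' : G.Walk, ω'.IsCycle ∧ ω'.src = v ∧ ¬ ω'.HasCuspAtV c v ∧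
        ω'.cuspCount c < ω.cuspCount c) := by
    intro m' ha hb hc hd
    exact cusp_min_aux c ω v x y κ l e ix iy hix0 hixy hiy hsimp hclosedv hsrcv hnocusp
      hxv' hyv' hxv hyv hcuspxy hends ρ χ ρe χe r hρsrc' hρtgt' hχsrc' hχtgt'
      hρe hρe_simple hρe_cf hρe_start' hχe hχe_simple hχe_cf hχe_start'
      hρarc' hχarc' hrlen hre0 hrsrcv hrl hrsimple hrcf hpρ' hpχ' i₁ m'
      h1i hi1r ha hb hc hint' hd
  -- reversed facts
  have hrevclosed : (rev ω).vtx 0 = (rev ω).vtx ((rev ω).len) := by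
    rw [rev_len, rev_vtx ω (by omega), rev_vtx ω (le_refl _), Nat.sub_zero, Nat.sub_self]
    exact hclosedv.symm
  have hrevsrc : (rev ω).vtx 0 = v := by
    rw [rev_vtx ω (by omega), Nat.sub_zero, ← hclosedv, hsrcv]
  have hrevnocusp : ¬ (rev ω).HasCuspAtV c v := by
    intro h
    obtain ⟨j, hcusp, hvtx⟩ := (hasCuspAtV_iff _ v).mp h
    rw [cuspIdx_rev_iff ω e hclosedv] at hcusp
    apply hnocusp
    rw [hasCuspAtV_iff]
    rcases hcusp with ⟨h0, hc0⟩ | ⟨h1, h2, hck⟩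
    · exact ⟨0, hc0, hsrcv⟩
    · refine ⟨ω.len - j, hck, ?_⟩
      rw [← rev_vtx ω (by omega)]
      exact hvtx
  have hrevx : (rev ω).vtx (ω.len - iy) = y := by
    rw [rev_vtx ω (by omega), show ω.len - (ω.len - iy) = iy by omega, hyv']
  have hrevy : (rev ω).vtx (ω.len - ix) = x := by
    rw [rev_vtx ω (by omega), show ω.len - (ω.len - ix) = ix by omega, hxv']
  have hrevjc : ∃ j, ω.len - iy ≤ j ∧ j ≤ ω.len - ix ∧ (rev ω).CuspIdx c j := by
    obtain ⟨jc, h1, h2, h3⟩ := hcuspxy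
    have hjcn : jc < ω.len := cuspIdx_lt h3
    refine ⟨ω.len - jc, by omega, by omega, ?_⟩
    rw [cuspIdx_rev_iff ω e hclosedv]
    right
    refine ⟨by omega, by omega, ?_⟩
    rw [show ω.len - (ω.len - jc) = jc by omega]
    exact h3
  have hrevρe_start : c (χe.edg e 0) y ≠ c ((rev ω).edg e (ω.len - iy - 1)) y := by
    rw [rev_edg ω e (by omega), show ω.len - 1 - (ω.len - iy - 1) = iy by omega]
    exact hχe_start'
  have hrevχe_start : c (ρe.edg e 0) x ≠ c ((rev ω).edg e (ω.len - ix)) x := by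
    rw [rev_edg ω e (by omega), show ω.len - 1 - (ω.len - ix) = ix - 1 by omega]
    exact hρe_start'
  have hrevρarc : ∀ a, a ≤ χ.len → ∀ j, j ≤ (rev ω).len →
      (j ≤ ω.len - iy ∨ ω.len - ix ≤ j) → (rev ω).vtx j = χ.vtx a →
      χ.vtx a = y ∨ χ.vtx a = x := by
    intro a ha j hj harcj hc
    rw [rev_len] at hj
    rw [rev_vtx ω hj] at hc
    exact (hχarc' a ha (ω.len - j) (by omega) (by omega) hc).symm
  have hrevχarc : ∀ a, a ≤ ρ.len → ∀ j, j ≤ (rev ω).len →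
      (j ≤ ω.len - iy ∨ ω.len - ix ≤ j) → (rev ω).vtx j = ρ.vtx a →
      ρ.vtx a = y ∨ ρ.vtx a = x := by
    intro a ha j hj harcj hc
    rw [rev_len] at hj
    rw [rev_vtx ω hj] at hc
    exact (hρarc' a ha (ω.len - j) (by omega) (by omega) hc).symm
  have hrevint : ∀ i, 1 ≤ i → i < i₁ → ∀ j, j ≤ (rev ω).len →
      (j ≤ ω.len - iy ∨ ω.len - ix ≤ j) → (rev ω).vtx j ≠ r.vtx i := by
    intro i h1 hlt j hj harcj
    rw [rev_len] at hj
    rw [rev_vtx ω hj]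
    exact hint' i h1 hlt (ω.len - j) (by omega) (by omega)
  have REV : ∀ m', ω.len - ix ≤ m' → m' ≤ ω.len → (rev ω).vtx m' = r.vtx i₁ →
      (m' = ω.len → c (r.edg e (i₁ - 1)) (r.vtx i₁) ≠ c ((rev ω).edg e 0) v) →
      (∃ δ : G.Walk, δ.IsCycle ∧ δ.CuspFree c ∧ δ.MemE e) ∨
      (∃ ω' : G.Walk, ω'.IsCycle ∧ ω'.src = v ∧ ¬ ω'.HasCuspAtV c v ∧
        ω'.cuspCount c < ω.cuspCount c) := by
    intro m' ha hb hc hd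
    have hres := cusp_min_aux c (rev ω) v y x κ l e (ω.len - iy) (ω.len - ix)
      (by omega) (by omega) (by rw [rev_len]; omega)
      (rev_isSimple e hsimp) hrevclosed hrevsrc hrevnocusp
      hrevx hrevy hyv hxv hrevjc hends χ ρ χe ρe r hχsrc' hχtgt' hρsrc' hρtgt'
      hχe hχe_simple hχe_cf hrevρe_start hρe hρe_simple hρe_cf hrevχe_start
      hrevρarc hrevχarc hrlen hre0 hrsrcv hrl hrsimple hrcf hpχ' hpρ' i₁ m'
      h1i hi1r ha (by rw [rev_len]; exact hb) hc hrevint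
      (fun hm => hd (by rw [rev_len] at hm; exact hm))
    rcases hres with h | ⟨ω', h1', h2', h3', h4'⟩
    · exact Or.inl h
    · right
      refine ⟨ω', h1', h2', h3', ?_⟩
      rwa [cuspCount_rev ω e hclosedv] at h4'
  -- helper: the two colors at v on ω differ
  have hvne : c (ω.edg e (ω.len - 1)) v ≠ c (ω.edg e 0) v := by
    intro hcon
    apply hnocusp
    rw [hasCuspAtV_iff]
    refine ⟨0, ?_, hsrcv⟩
    rw [cuspIdx_iff _ e]
    right
    refine ⟨rfl, hclosedv, by omega, ?_, ?_⟩
    · exact fun hcon2 => heinjω 0 (ω.len - 1) (by omega) (by omega) hcon2.symm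
    · rw [hsrcv]
      exact hcon
  -- final case analysis
  rcases hmarc with hmx | hmy
  · -- m lies on ω[v..x]
    by_cases hm0 : m = 0
    · -- the endpoint is v itself
      subst hm0
      have hwv : ω.vtx ω.len = r.vtx i₁ := by rw [← hclosedv]; exact hwm
      by_cases hcol : c (r.edg e (i₁ - 1)) (r.vtx i₁) = c (ω.edg e (ω.len - 1)) v
      · -- go with the original orientation, attaching at position ω.len
        apply ORIG ω.len (by omega) (le_refl _) hwv
        intro _ hcon
        rw [hcon] at hcol
        exact hvne hcol.symm
      · -- go with the reversed orientation, attaching at position ω.len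
        apply REV ω.len (by omega) (le_refl _) (by rw [rev_vtx ω (le_refl _), Nat.sub_self]; exact hwm)
        intro _ hcon
        apply hcol
        rw [rev_edg ω e (by omega), show ω.len - 1 - 0 = ω.len - 1 by omega] at hcon
        exact hcon
    · -- reversed orientation with m' = ω.len - m
      apply REV (ω.len - m) (by omega) (by omega)
        (by rw [rev_vtx ω (by omega), show ω.len - (ω.len - m) = m by omega]; exact hwm)
      intro hcon
      exact absurd hcon (by omega)
  · -- m lies on ω[y..v]
    by_cases hmn' : m < ω.len
    · exact ORIG m hmy (by omega) hwm (fun hcon => absurd hcon (by omega))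
    · have hmeq : m = ω.len := by omega
      subst hmeq
      have hwv : ω.vtx 0 = r.vtx i₁ := by rw [hclosedv]; exact hwm
      by_cases hcol : c (r.edg e (i₁ - 1)) (r.vtx i₁) = c (ω.edg e 0) v
      · -- reversed orientation
        apply REV ω.len (by omega) (le_refl _) (by rw [rev_vtx ω (le_refl _), Nat.sub_self]; exact hwv)
        intro _ hcon
        rw [rev_edg ω e (by omega), show ω.len - 1 - 0 = ω.len - 1 by omega] at hcon
        rw [hcol] at hcon
        exact hvne hcon.symm
      · exact ORIG ω.len (by omega) (le_refl _) hwm (fun _ => hcol)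
end

section
/- In any locally colored graph, the relation ⊳ on vertex-color pairs is a strict partial order: it is irreflexive and transitive. -/
namespace MyAux
open Multigraph

variable {V E C : Type} {G : Multigraph V E}

/-- Prefix of a walk. -/
def wtake (p : G.Walk) (n : ℕ) (hn : n ≤ p.len) : G.Walk where
  len := n
  vert i := p.vert ⟨i, by omega⟩
  edge i := p.edge ⟨i, by omega⟩
  incs i h w := p.incs i (by omega) w

def appVert (p q : G.Walk) (i : ℕ) (h : i < p.len + q.len + 1) : V :=
  if hle : i ≤ p.len then p.vert ⟨i, by omega⟩ else q.vert ⟨i - p.len, by omega⟩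

def appEdge (p q : G.Walk) (i : ℕ) (h : i < p.len + q.len) : E :=
  if hlt : i < p.len then p.edge ⟨i, hlt⟩ else q.edge ⟨i - p.len, by omega⟩

lemma appVert_left (p q : G.Walk) (i : ℕ) (h : i < p.len + q.len + 1)
    (hi : i < p.len + 1) : appVert p q i h = p.vert ⟨i, hi⟩ :=
  dif_pos (by omega)

lemma appVert_right (p q : G.Walk) (i : ℕ) (h : i < p.len + q.len + 1)
    (hi : p.len < i) (hi2 : i - p.len < q.len + 1) :
    appVert p q i h = q.vert ⟨i - p.len, hi2⟩ :=
  dif_neg (by omega)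

lemma appEdge_left (p q : G.Walk) (i : ℕ) (h : i < p.len + q.len)
    (hi : i < p.len) : appEdge p q i h = p.edge ⟨i, hi⟩ :=
  dif_pos hi

lemma appEdge_right (p q : G.Walk) (i : ℕ) (h : i < p.len + q.len)
    (hi : p.len ≤ i) (hi2 : i - p.len < q.len) :
    appEdge p q i h = q.edge ⟨i - p.len, hi2⟩ :=
  dif_neg (by omega)

/-- Concatenation of walks. -/
def wapp (p q : G.Walk) (hpq : p.tgt = q.src) : G.Walk where
  len := p.len + q.len
  vert i := appVert p q i i.isLt
  edge i := appEdge p q i i.isLt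
  incs := by
    intro i h w
    show G.inc (appEdge p q i h) w ↔
      w = appVert p q i (by omega) ∨ w = appVert p q (i + 1) (by omega)
    by_cases hip : i < p.len
    · rw [appEdge_left p q i h hip, appVert_left p q i _ (by omega),
        appVert_left p q (i + 1) _ (by omega)]
      exact p.incs i hip w
    · rw [appEdge_right p q i h (by omega) (by omega)]
      by_cases hb : i = p.len
      · subst hb
        rw [appVert_left p q p.len _ (by omega),
          appVert_right p q (p.len + 1) _ (by omega) (by omega)]
        have h0 : 0 < q.len := by omega
        have hq0 := q.incs 0 h0 w
        have e0 : (⟨p.len - p.len, by omega⟩ : Fin q.len) = ⟨0, h0⟩ := by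
          apply Fin.ext; simp
        have e1 : (⟨p.len + 1 - p.len, by omega⟩ : Fin (q.len + 1)) = ⟨1, by omega⟩ := by
          apply Fin.ext; simp
        rw [e0, e1]
        have hv0 : p.vert ⟨p.len, by omega⟩ = q.vert ⟨0, by omega⟩ := hpq
        rw [hv0]
        exact hq0
      · rw [appVert_right p q i _ (by omega) (by omega),
          appVert_right p q (i + 1) _ (by omega) (by omega)]
        have hj : i - p.len < q.len := by omega
        have hq0 := q.incs (i - p.len) hj w
        have e1 : (⟨i + 1 - p.len, by omega⟩ : Fin (q.len + 1)) =
            ⟨(i - p.len) + 1, by omega⟩ := by apply Fin.ext; simp; omega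
        rw [e1]
        exact hq0

lemma wapp_vert (p q : G.Walk) (hpq : p.tgt = q.src) (i : ℕ)
    (h : i < (wapp p q hpq).len + 1) :
    (wapp p q hpq).vert ⟨i, h⟩ = appVert p q i (lt_of_lt_of_eq h rfl) := rfl

lemma wapp_edge (p q : G.Walk) (hpq : p.tgt = q.src) (i : ℕ)
    (h : i < (wapp p q hpq).len) :
    (wapp p q hpq).edge ⟨i, h⟩ = appEdge p q i (lt_of_lt_of_eq h rfl) := rfl

lemma distinct_of_simple_open {p : G.Walk} (hs : p.IsSimple) (ho : p.IsOpen)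
    {i j : ℕ} (hi : i < p.len + 1) (hj : j < p.len + 1) (hij : i < j)
    (hv : p.vert ⟨i, hi⟩ = p.vert ⟨j, hj⟩) : False := by
  obtain ⟨h0, hL⟩ := hs.2 i j hi hj hij hv
  subst h0
  apply ho
  show p.vert ⟨0, by omega⟩ = p.vert ⟨p.len, by omega⟩
  rw [hv]
  congr 1
  exact Fin.ext hL

lemma stepsTo_take {c : E → V → C} {u x : V} {β τ : C} {q : G.Walk}
    (hq : G.StepsTo c u β x τ q) (n : ℕ) (h0 : 0 < n) (hn : n ≤ q.len) :
    G.StepsTo c u β (q.vert ⟨n, by omega⟩)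
      (c (q.edge ⟨n - 1, by omega⟩) (q.vert ⟨n, by omega⟩)) (wtake q n hn) := by
  have hlen : (wtake q n hn).len = n := rfl
  obtain ⟨hsimp, hopen, hcf, hsrc, htgt, hstart, hend⟩ := hq
  have hsimp' : (wtake q n hn).IsSimple := by
    constructor
    · intro i j hi hj he
      exact hsimp.1 i j (by omega) (by omega) he
    · intro i j hi hj hij hv
      obtain ⟨h0', hL⟩ := hsimp.2 i j (by omega) (by omega) hij hv
      omega
  have hopen' : (wtake q n hn).IsOpen := by
    intro hcl
    have : q.vert ⟨0, by omega⟩ = q.vert ⟨n, by omega⟩ := hcl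
    exact distinct_of_simple_open hsimp hopen (by omega) (by omega) h0 this
  refine ⟨hsimp', hopen', ?_, ?_, rfl, ?_, ?_⟩
  · intro j hj
    obtain ⟨u', α', hc⟩ := hj
    rcases hc with ⟨h1, h2, hv, hne, hc1, hc2⟩ | ⟨_, hcl, _⟩
    · exact hcf j ⟨u', α', Or.inl ⟨h1, by omega, hv, hne, hc1, hc2⟩⟩
    · exact hopen' hcl
  · exact hsrc
  · intro h
    exact hstart (by omega)
  · exact ⟨h0, rfl⟩

lemma tri_disj {c : E → V → C} {v u : V} {α β : C} {p : G.Walk}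
    (hp : G.TriPath c v α u β p) {x : V} {τ : C} {q : G.Walk}
    (hq : G.StepsTo c u β x τ q) :
    ∀ y : V, p.MemV y → q.MemV y → y = u := by
  intro y hyp hyq
  obtain ⟨i, hi, hvi⟩ := hyq
  rcases Nat.eq_zero_or_pos i with rfl | h0
  · rw [← hvi]
    exact hq.2.2.2.1
  · exfalso
    have hst := stepsTo_take hq i h0 (by omega)
    have := hp.2 _ _ _ hst
    rw [hvi] at this
    exact this hyp

lemma memV_of_inc {p : G.Walk} {i : ℕ} (hi : i < p.len) {w : V}
    (hw : G.inc (p.edge ⟨i, hi⟩) w) : p.MemV w := by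
  rw [p.incs i hi w] at hw
  rcases hw with h | h
  · exact ⟨i, by omega, h.symm⟩
  · exact ⟨i + 1, by omega, h.symm⟩

lemma wapp_memV (p q : G.Walk) (hpq : p.tgt = q.src) (y : V) :
    (wapp p q hpq).MemV y ↔ p.MemV y ∨ q.MemV y := by
  have hlen : (wapp p q hpq).len = p.len + q.len := rfl
  constructor
  · rintro ⟨i, hi, rfl⟩
    rw [wapp_vert]
    by_cases h : i ≤ p.len
    · left
      exact ⟨i, by omega, (appVert_left p q i hi (by omega)).symm⟩
    · right
      exact ⟨i - p.len, by omega, (appVert_right p q i hi (by omega) (by omega)).symm⟩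
  · rintro (⟨i, hi, rfl⟩ | ⟨i, hi, rfl⟩)
    · exact ⟨i, by omega, by rw [wapp_vert]; exact appVert_left p q i _ hi⟩
    · rcases Nat.eq_zero_or_pos i with rfl | h0
      · refine ⟨p.len, by omega, ?_⟩
        rw [wapp_vert, appVert_left p q p.len _ (by omega)]
        exact hpq
      · refine ⟨p.len + i, by omega, ?_⟩
        rw [wapp_vert, appVert_right p q (p.len + i) _ (by omega) (by omega)]
        congr 1
        exact Fin.ext (by simp)

lemma stepsTo_append {c : E → V → C} {v u x : V} {α β τ : C} {p q : G.Walk}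
    (hpq : p.tgt = q.src)
    (hp : G.StepsTo c v α u β p) (hq : G.StepsTo c u β x τ q)
    (hdisj : ∀ y : V, p.MemV y → q.MemV y → y = u) :
    G.StepsTo c v α x τ (wapp p q hpq) := by
  have hlen : (wapp p q hpq).len = p.len + q.len := rfl
  obtain ⟨hps, hpo, hpcf, hpsrc, hptgt, hpstart, hpend⟩ := hp
  obtain ⟨hqs, hqo, hqcf, hqsrc, hqtgt, hqstart, hqend⟩ := hq
  obtain ⟨hL, hpcol⟩ := hpend
  obtain ⟨hM, hqcol⟩ := hqend
  have hup : p.vert ⟨p.len, by omega⟩ = u := hptgt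
  have huq : q.vert ⟨0, by omega⟩ = u := hqsrc
  -- membership helpers
  have memp : ∀ (i : ℕ) (hi : i < p.len + 1), p.MemV (p.vert ⟨i, hi⟩) :=
    fun i hi => ⟨i, hi, rfl⟩
  have memq : ∀ (i : ℕ) (hi : i < q.len + 1), q.MemV (q.vert ⟨i, hi⟩) :=
    fun i hi => ⟨i, hi, rfl⟩
  -- all vertices of the concatenation are distinct
  have hdist : ∀ (i j : ℕ) (hi : i < p.len + q.len + 1) (hj : j < p.len + q.len + 1),
      i < j → appVert p q i hi = appVert p q j hj → False := by
    intro i j hi hj hij hv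
    by_cases hjp : j ≤ p.len
    · rw [appVert_left p q i hi (by omega), appVert_left p q j hj (by omega)] at hv
      exact distinct_of_simple_open hps hpo _ _ hij hv
    · by_cases hip : i ≤ p.len
      · rw [appVert_left p q i hi (by omega),
          appVert_right p q j hj (by omega) (by omega)] at hv
        have hyu : p.vert ⟨i, by omega⟩ = u := by
          apply hdisj
          · exact memp i (by omega)
          · rw [hv]; exact memq _ _
        rcases Nat.lt_or_ge i p.len with hilt | hige
        · exact distinct_of_simple_open hps hpo (by omega) (by omega) hilt
            (by rw [hyu, ← hup])
        · have hieq : i = p.len := by omega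
          subst hieq
          have : q.vert ⟨0, by omega⟩ = q.vert ⟨j - p.len, by omega⟩ := by
            rw [huq, ← hyu, hv]
          exact distinct_of_simple_open hqs hqo _ _ (by omega) this
      · rw [appVert_right p q i hi (by omega) (by omega),
          appVert_right p q j hj (by omega) (by omega)] at hv
        exact distinct_of_simple_open hqs hqo _ _ (by omega) hv
  have hopen' : (wapp p q hpq).IsOpen := by
    intro hcl
    have : appVert p q 0 (by omega) = appVert p q (p.len + q.len) (by omega) := hcl
    exact hdist 0 (p.len + q.len) (by omega) (by omega) (by omega) this
  refine ⟨⟨?_, ?_⟩, hopen', ?_, ?_, ?_, ?_, ?_⟩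
  · -- edges distinct
    intro i j hi hj he
    rw [wapp_edge, wapp_edge] at he
    rcases Nat.lt_or_ge i p.len with hip | hip <;>
      rcases Nat.lt_or_ge j p.len with hjp | hjp
    · rw [appEdge_left p q i hi hip, appEdge_left p q j hj hjp] at he
      exact hps.1 i j hip hjp he
    · exfalso
      rw [appEdge_left p q i hi hip, appEdge_right p q j hj hjp (by omega)] at he
      obtain ⟨a, b, hab, hiff⟩ := G.exists_two (p.edge ⟨i, hip⟩)
      have hinca : G.inc (p.edge ⟨i, hip⟩) a := (hiff a).2 (Or.inl rfl)
      have hincb : G.inc (p.edge ⟨i, hip⟩) b := (hiff b).2 (Or.inr rfl)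
      have hinca' : G.inc (q.edge ⟨j - p.len, by omega⟩) a := he ▸ hinca
      have hincb' : G.inc (q.edge ⟨j - p.len, by omega⟩) b := he ▸ hincb
      have hau : a = u := hdisj a (memV_of_inc hip hinca)
        (memV_of_inc (by omega) hinca')
      have hbu : b = u := hdisj b (memV_of_inc hip hincb)
        (memV_of_inc (by omega) hincb')
      exact hab (hau.trans hbu.symm)
    · exfalso
      rw [appEdge_right p q i hi hip (by omega), appEdge_left p q j hj hjp] at he
      obtain ⟨a, b, hab, hiff⟩ := G.exists_two (p.edge ⟨j, hjp⟩)
      have hinca : G.inc (p.edge ⟨j, hjp⟩) a := (hiff a).2 (Or.inl rfl)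
      have hincb : G.inc (p.edge ⟨j, hjp⟩) b := (hiff b).2 (Or.inr rfl)
      have hinca' : G.inc (q.edge ⟨i - p.len, by omega⟩) a := he ▸ hinca
      have hincb' : G.inc (q.edge ⟨i - p.len, by omega⟩) b := he ▸ hincb
      have hau : a = u := hdisj a (memV_of_inc hjp hinca)
        (memV_of_inc (by omega) hinca')
      have hbu : b = u := hdisj b (memV_of_inc hjp hincb)
        (memV_of_inc (by omega) hincb')
      exact hab (hau.trans hbu.symm)
    · rw [appEdge_right p q i hi hip (by omega),
        appEdge_right p q j hj hjp (by omega)] at he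
      have := hqs.1 (i - p.len) (j - p.len) (by omega) (by omega) he
      omega
  · -- vertices distinct
    intro i j hi hj hij hv
    rw [wapp_vert, wapp_vert] at hv
    exact absurd hv (fun hv => hdist i j hi hj hij hv)
  · -- cusp-free
    intro j hj
    obtain ⟨u', α', hc⟩ := hj
    rcases hc with ⟨h1, h2, hv, hne, hc1, hc2⟩ | ⟨_, hcl, _⟩
    swap
    · exact hopen' hcl
    rw [wapp_vert] at hv
    simp only [wapp_edge] at hne hc1 hc2
    rcases Nat.lt_or_ge j p.len with hjp | hjp
    · rw [appVert_left p q j _ (by omega)] at hv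
      rw [appEdge_left p q (j - 1) _ (by omega)] at hne hc1
      rw [appEdge_left p q j _ (by omega)] at hne hc2
      exact hpcf j ⟨u', α', Or.inl ⟨h1, hjp, hv, hne, hc1, hc2⟩⟩
    rcases Nat.lt_or_ge p.len j with hjp' | hjp'
    · rw [appVert_right p q j _ (by omega) (by omega)] at hv
      rw [appEdge_right p q (j - 1) _ (by omega) (by omega)] at hne hc1
      rw [appEdge_right p q j _ (by omega) (by omega)] at hne hc2
      have e1 : (⟨j - 1 - p.len, by omega⟩ : Fin q.len) =
          ⟨(j - p.len) - 1, by omega⟩ := Fin.ext (by simp; omega)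
      rw [e1] at hne hc1
      refine hqcf (j - p.len) ⟨u', α', Or.inl ⟨by omega, by omega, hv, ?_, hc1, hc2⟩⟩
      exact hne
    · -- j = p.len : junction
      have hje : j = p.len := by omega
      subst hje
      rw [appVert_left p q p.len _ (by omega)] at hv
      rw [appEdge_left p q (p.len - 1) _ (by omega)] at hc1
      rw [appEdge_right p q p.len _ (by omega) (by omega)] at hc2
      have hu'u : u' = u := by rw [← hv, hup]
      subst hu'u
      have e0 : (⟨p.len - p.len, by omega⟩ : Fin q.len) = ⟨0, by omega⟩ :=
        Fin.ext (by simp)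
      rw [e0] at hc2
      have hβ : α' = β := by
        rw [← hc1, ← hpcol, hptgt]
      apply hqstart (by omega)
      show c (q.edge ⟨0, by omega⟩) (q.vert ⟨0, by omega⟩) = β
      rw [huq, hc2, hβ]
  · -- src
    show appVert p q 0 (by omega) = v
    rw [appVert_left p q 0 _ (by omega)]
    exact hpsrc
  · -- tgt
    show appVert p q (p.len + q.len) (by omega) = x
    rw [appVert_right p q (p.len + q.len) _ (by omega) (by omega)]
    rw [← hqtgt]
    show q.vert _ = q.vert _
    congr 1
    exact Fin.ext (by simp)
  · -- start color
    intro h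
    show c (appEdge p q 0 (by omega)) (appVert p q 0 (by omega)) ≠ α
    rw [appEdge_left p q 0 _ (by omega), appVert_left p q 0 _ (by omega)]
    exact hpstart hL
  · -- end color
    refine ⟨by omega, ?_⟩
    show c (appEdge p q (p.len + q.len - 1) (by omega))
      (appVert p q (p.len + q.len) (by omega)) = τ
    rw [appEdge_right p q (p.len + q.len - 1) _ (by omega) (by omega),
      appVert_right p q (p.len + q.len) _ (by omega) (by omega)]
    have e1 : (⟨p.len + q.len - 1 - p.len, by omega⟩ : Fin q.len) =
        ⟨q.len - 1, by omega⟩ := Fin.ext (by simp; omega)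
    have e2 : (⟨p.len + q.len - p.len, by omega⟩ : Fin (q.len + 1)) =
        ⟨q.len, by omega⟩ := Fin.ext (by simp)
    rw [e1, e2]
    exact hqcol

end MyAux
open Multigraph in
/-- The relation `⊳` on vertex-color pairs is a strict partial order:
irreflexive and transitive. -/
theorem tri_strict_partial_order
    {V E C : Type} [Fintype V] [Fintype E] [Fintype C]
    (G : Multigraph V E) (c : E → V → C) :
    (∀ (v : V) (α : C), ¬ G.Tri c v α v α) ∧
    (∀ (v u x : V) (α β τ : C),
      G.Tri c v α u β → G.Tri c u β x τ → G.Tri c v α x τ) := by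
  constructor
  · rintro v α ⟨p, hst, -⟩
    exact hst.2.1 (hst.2.2.2.1.trans hst.2.2.2.2.1.symm)
  · rintro v u x α β τ ⟨p, hp⟩ ⟨q, hq⟩
    have hpq : p.tgt = q.src := hp.1.2.2.2.2.1.trans hq.1.2.2.2.1.symm
    have hdisj := MyAux.tri_disj hp hq.1
    refine ⟨MyAux.wapp p q hpq, MyAux.stepsTo_append hpq hp.1 hq.1 hdisj, ?_⟩
    intro y σ s hs
    rw [MyAux.wapp_memV]
    rintro (hyp | hyq)
    · have hqs : q.tgt = s.src := hq.1.2.2.2.2.1.trans hs.2.2.2.1.symm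
      have hdisj2 := MyAux.tri_disj hq hs
      exact hp.2 y σ _ (MyAux.stepsTo_append hqs hq.1 hs hdisj2) hyp
    · exact hq.2 y σ s hs hyq
end

section
/- Let G be a locally colored graph with local coloring c, and let e be an edge with endpoints v and u. Assume (v, c(e,v)) is not a cusp-point, i.e. every edge f ≠ e incident to v satisfies c(f,v) ≠ c(e,v). Then either v belongs to a cusp-free cycle, or for every color α ≠ c(e,v) one has (v,α) ⊳_{(v,e,u)} (u, c(e,u)). -/
/-!
If a `⇝`-path `q` from `(u, c(e,u))` ended on a vertex of `(v, e, u)`, it would end at `v`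
(it is open, so not at `u`), and closing it with `e` would give a cusp-free cycle through `v`:
there is no cusp at `u` because the starting color of `q` differs from `c(e,u)`, and none at
`v` because `(v, c(e,v))` is not a cusp-point.
-/

namespace Multigraph

variable {V E C : Type} {G : Multigraph V E}

namespace Walk

theorem inc_edge_left (p : G.Walk) (i : ℕ) (h : i < p.len) :
    G.inc (p.edge ⟨i, h⟩) (p.vert ⟨i, by omega⟩) :=
  (p.incs i h _).2 (Or.inl rfl)

theorem inc_edge_right (p : G.Walk) (i : ℕ) (h : i < p.len) :
    G.inc (p.edge ⟨i, h⟩) (p.vert ⟨i + 1, by omega⟩) :=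
  (p.incs i h _).2 (Or.inr rfl)

theorem inc_last_edge_tgt (p : G.Walk) (h : 0 < p.len) :
    G.inc (p.edge ⟨p.len - 1, by omega⟩) p.tgt := by
  have hfin : (⟨p.len - 1 + 1, by omega⟩ : Fin (p.len + 1)) = ⟨p.len, by omega⟩ :=
    Fin.ext (by simp only; omega)
  simpa only [hfin, tgt] using p.inc_edge_right (p.len - 1) (by omega)

theorem IsSimple.vert_ne_of_isOpen {p : G.Walk} (hs : p.IsSimple) (ho : p.IsOpen)
    {i j : ℕ} (hi : i < p.len + 1) (hj : j < p.len + 1) (hij : i < j) :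
    p.vert ⟨i, hi⟩ ≠ p.vert ⟨j, hj⟩ := by
  intro heq
  obtain ⟨rfl, rfl⟩ := hs.2 i j hi hj hij heq
  exact ho heq

def snoc (q : G.Walk) (e : E) (u : V) (he : ∀ w, G.inc e w ↔ w = q.tgt ∨ w = u) :
    G.Walk where
  len := q.len + 1
  vert i := if h : (i : ℕ) < q.len + 1 then q.vert ⟨i, h⟩ else u
  edge i := if h : (i : ℕ) < q.len then q.edge ⟨i, h⟩ else e
  incs i h w := by
    by_cases hi : i < q.len
    · simp only [dif_pos hi, dif_pos (show i < q.len + 1 by omega),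
        dif_pos (show i + 1 < q.len + 1 by omega)]
      exact q.incs i hi w
    · obtain rfl : i = q.len := by omega
      simp only [dif_neg (lt_irrefl q.len), dif_pos (Nat.lt_succ_self q.len),
        dif_neg (lt_irrefl (q.len + 1))]
      exact he w

section snoc

variable {q : G.Walk} {e : E} {u : V} {he : ∀ w, G.inc e w ↔ w = q.tgt ∨ w = u}

theorem snoc_vert (i : Fin ((q.snoc e u he).len + 1)) :
    (q.snoc e u he).vert i = if h : (i : ℕ) < q.len + 1 then q.vert ⟨i, h⟩ else u :=
  rfl

theorem snoc_edge (i : Fin (q.snoc e u he).len) :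
    (q.snoc e u he).edge i = if h : (i : ℕ) < q.len then q.edge ⟨i, h⟩ else e :=
  rfl

theorem memV_snoc_tgt : (q.snoc e u he).MemV q.tgt :=
  ⟨q.len, by simp only [snoc]; omega,
    by simp only [snoc_vert, dif_pos (Nat.lt_succ_self _)]; rfl⟩

theorem snoc_src : (q.snoc e u he).src = q.src := by
  simp only [src, snoc_vert, dif_pos (Nat.succ_pos q.len)]

theorem isCycle_snoc (hs : q.IsSimple) (ho : q.IsOpen) (hne : ¬ q.MemE e) (hu : u = q.src) :
    (q.snoc e u he).IsCycle := by
  refine ⟨⟨fun i j hi hj heq => ?_, fun i j hi hj hij heq => ?_⟩, ?_, Nat.succ_pos _⟩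
  · simp only [snoc_edge] at heq
    simp only [snoc] at hi hj
    split_ifs at heq with hi' hj' hj'
    · exact hs.1 i j hi' hj' heq
    · exact absurd ⟨i, hi', heq⟩ hne
    · exact absurd ⟨j, hj', heq.symm⟩ hne
    · omega
  · simp only [snoc_vert] at heq
    simp only [snoc] at hj
    split_ifs at heq with hi' hj'
    · exact absurd heq (hs.vert_ne_of_isOpen ho hi' hj' hij)
    · obtain rfl : j = q.len + 1 := by omega
      refine ⟨?_, rfl⟩
      by_contra hi0
      exact hs.vert_ne_of_isOpen ho (Nat.succ_pos _) hi' (Nat.pos_of_ne_zero hi0)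
        (heq.trans hu).symm
    all_goals omega
  · rw [IsClosed, snoc_src, tgt, snoc_vert, dif_neg (by simp [snoc])]
    exact hu.symm

/-- Appending an edge can only create cusps at the junction `q.tgt` and, if the result
is closed, at its source. -/
theorem cuspFree_snoc (c : E → V → C) (hcf : q.CuspFree c) (hpos : 0 < q.len)
    (hlast : c (q.edge ⟨q.len - 1, by omega⟩) q.tgt ≠ c e q.tgt)
    (hfirst : c (q.edge ⟨0, hpos⟩) q.src ≠ c e q.src) :
    (q.snoc e u he).CuspFree c := by
  rintro j ⟨w, β, ⟨hj0, hj, hw, hne, hc1, hc2⟩ | ⟨rfl, -, hsw, _, -, hc1', hc2'⟩⟩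
  · have hj1 : j - 1 < q.len := by simp only [snoc] at hj; omega
    simp only [snoc_vert, snoc_edge, dif_pos (show j < q.len + 1 by omega),
      dif_pos hj1] at hw hne hc1 hc2
    by_cases hj' : j < q.len
    · simp only [dif_pos hj'] at hne hc2
      exact hcf j ⟨w, β, Or.inl ⟨hj0, hj', hw, hne, hc1, hc2⟩⟩
    · obtain rfl : j = q.len := by simp only [snoc] at hj; omega
      simp only [dif_neg (lt_irrefl _)] at hc2
      subst hw
      exact hlast (hc1.trans hc2.symm)
  · rw [snoc_src] at hsw
    subst hsw
    simp only [snoc, Nat.add_sub_cancel, lt_irrefl, dite_false, dif_pos hpos] at hc1' hc2'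
    exact hfirst (hc2'.trans hc1'.symm)

end snoc

end Walk

/-- A `⇝`-path from `(u, c(e,u))` to `v` cannot use `e`: its only edge at `u` is the first
one, whose color at `u` differs from `c(e,u)`. -/
theorem StepsTo.not_memE {c : E → V → C} {e : E} {v u : V} {τ : C} {q : G.Walk}
    (hends : ∀ w : V, G.inc e w ↔ w = v ∨ w = u) (hq : G.StepsTo c u (c e u) v τ q) :
    ¬ q.MemE e := by
  obtain ⟨hs, ho, -, hsrc, htgt, hstart, -⟩ := hq
  rintro ⟨i, hi, rfl⟩
  rcases (hends _).1 (q.inc_edge_left i hi) with hv | hu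
  · exact hs.vert_ne_of_isOpen ho _ (Nat.lt_succ_self _) hi (hv.trans htgt.symm)
  · obtain rfl : i = 0 := by
      by_contra hi0
      exact hs.vert_ne_of_isOpen ho (Nat.succ_pos _) _ (Nat.pos_of_ne_zero hi0)
        (hsrc.trans hu.symm)
    exact hstart hi (hsrc ▸ rfl)

theorem exists_cuspFree_cycle_of_stepsTo {c : E → V → C} {e : E} {v u : V} {τ : C}
    {q : G.Walk} (hends : ∀ w : V, G.inc e w ↔ w = v ∨ w = u)
    (hnc : ¬ G.IsCuspPoint c v (c e v)) (hq : G.StepsTo c u (c e u) v τ q) :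
    ∃ δ : G.Walk, δ.IsCycle ∧ δ.CuspFree c ∧ δ.MemV v := by
  have hne := hq.not_memE hends
  obtain ⟨hs, ho, hcf, hsrc, rfl, hstart, hpos, -⟩ := hq
  have he : ∀ w, G.inc e w ↔ w = q.tgt ∨ w = u := hends
  have hlast : c (q.edge ⟨q.len - 1, by omega⟩) q.tgt ≠ c e q.tgt := fun heq =>
    hnc ⟨_, e, fun h => hne ⟨_, _, h⟩, q.inc_last_edge_tgt hpos, (hends _).2 (Or.inl rfl),
      heq, rfl⟩
  refine ⟨q.snoc e u he, q.isCycle_snoc hs ho hne hsrc.symm,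
    q.cuspFree_snoc c hcf hpos hlast ?_, Walk.memV_snoc_tgt⟩
  rw [← hsrc] at hstart
  exact hstart hpos

theorem memV_singleWalk {e : E} {v u x : V} (hends : ∀ w : V, G.inc e w ↔ w = v ∨ w = u) :
    (G.singleWalk e v u hends).MemV x ↔ x = v ∨ x = u := by
  constructor
  · rintro ⟨i, hi, rfl⟩
    simp only [singleWalk]
    split_ifs <;> simp
  · rintro (rfl | rfl)
    · exact ⟨0, by simp [singleWalk], rfl⟩
    · exact ⟨1, by simp [singleWalk], rfl⟩

theorem stepsTo_singleWalk {c : E → V → C} {e : E} {v u : V} {α : C} (hvu : v ≠ u)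
    (hends : ∀ w : V, G.inc e w ↔ w = v ∨ w = u) (hα : α ≠ c e v) :
    G.StepsTo c v α u (c e u) (G.singleWalk e v u hends) := by
  refine ⟨⟨fun i j hi hj _ => ?_, fun i j hi hj hij _ => ?_⟩, hvu, ?_, rfl, rfl,
    fun _ h => hα h.symm, Nat.one_pos, rfl⟩
  · simp only [singleWalk] at hi hj; omega
  · simp only [singleWalk] at hi hj ⊢; omega
  · rintro j ⟨w, β, ⟨_, hj, -⟩ | ⟨-, hcl, -⟩⟩
    · simp only [singleWalk] at hj; omega
    · exact hvu hcl

end Multigraph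

open Multigraph in
theorem terminality_general
    {V E C : Type}
    (G : Multigraph V E) (c : E → V → C)
    (e : E) (v u : V) (hvu : v ≠ u)
    (hends : ∀ w : V, G.inc e w ↔ w = v ∨ w = u)
    (hnc : ¬ G.IsCuspPoint c v (c e v)) :
    (∃ δ : G.Walk, δ.IsCycle ∧ δ.CuspFree c ∧ δ.MemV v) ∨
    (∀ α : C, α ≠ c e v →
      G.TriPath c v α u (c e u) (G.singleWalk e v u hends)) := by
  by_cases hcyc : ∃ δ : G.Walk, δ.IsCycle ∧ δ.CuspFree c ∧ δ.MemV v
  · exact Or.inl hcyc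
  refine Or.inr fun α hα => ⟨stepsTo_singleWalk hvu hends hα, fun x τ q hq hx => ?_⟩
  rcases (memV_singleWalk hends).1 hx with rfl | rfl
  · exact hcyc (exists_cuspFree_cycle_of_stepsTo hends hnc hq)
  · obtain ⟨-, hopen, -, hsrc, htgt, -⟩ := hq
    exact hopen (hsrc.trans htgt.symm)

open Multigraph in
/-- Either `v` lies on a cusp-free cycle, or `(v, α) ⊳_{(v,e,u)} (u, c(e,u))`
for every color `α ≠ c(e,v)`. -/
theorem terminality
    {V E C : Type} [Fintype V] [Fintype E] [Fintype C]
    (G : Multigraph V E) (c : E → V → C)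
    (e : E) (v u : V) (hvu : v ≠ u)
    (hends : ∀ w : V, G.inc e w ↔ w = v ∨ w = u)
    (hnc : ¬ G.IsCuspPoint c v (c e v)) :
    (∃ δ : G.Walk, δ.IsCycle ∧ δ.CuspFree c ∧ δ.MemV v) ∨
    (∀ α : C, α ≠ c e v →
      G.TriPath c v α u (c e u) (G.singleWalk e v u hends)) :=
  terminality_general G c e v u hvu hends hnc
end
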